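/- arXiv:math/0607781 — 7 statements merged into one kernel-verified Lean document; each statement's English description precedes it below -/
import Mathlib

section
/- Let λ' > 0, let i be a nonnegative integer, and let g : ℤ → ℝ satisfy g(j) = 0 for all j ≤ 0 and λ' g(j+1) − j g(j) = 1[j = i] − e^{−λ'} λ'^i / i! for all j ≥ 0 (i.e., g is the solution of the Stein equation for the Poisson distribution Po(λ') and the set A = {i}). Then ∑_{k ∈ ℤ} |Δg(k)| ≤ 2/λ' and ∑_{k ∈ ℤ} (Δg(k))² ≤ 4/λ'², where Δg(k) := g(k+1) − g(k). -/
/-!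
Solving the recursion from `g 0 = 0` gives, with `p = Po(λ){i}`,
`g n = -p · Po(λ){< n} / (λ · Po(λ){n - 1})` for `n ≤ i` and
`g n = p · Po(λ){≥ n} / (λ · Po(λ){n - 1})` for `n > i`.
The first ratio increases and the second decreases in `n`, so `Δg` is nonpositive except at `i`,
and `g ≥ 0` beyond `i`. Hence the partial sums of `|Δg|` telescope to `2 Δg(i) - g N ≤ 2 Δg(i)`,
and `Δg(i) ≤ p (Po(λ){≤ i} + Po(λ){> i}) / (λ · Po(λ){i}) = 1 / λ`.
Finally `∑ (Δg)² ≤ (∑ |Δg|)²`.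
-/

open Finset

theorem sum_range_abs_sub_le_of_single_ascent {u : ℕ → ℝ} {i : ℕ} (h0 : u 0 = 0)
    (hstep : ∀ k, k ≠ i → u (k + 1) ≤ u k) (hnonneg : ∀ k, i < k → 0 ≤ u k) (N : ℕ) :
    ∑ k ∈ range N, |u (k + 1) - u k| ≤ 2 * (u (i + 1) - u i) := by
  have hui : u i ≤ 0 := by
    have := sum_range_sub u i
    rw [h0, sub_zero] at this
    rw [← this]
    exact sum_nonpos fun k hk => sub_nonpos.2 (hstep k (mem_range.1 hk).ne)
  have habs : ∀ k, |u (k + 1) - u k| =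
      (if k = i then 2 * (u (i + 1) - u i) else 0) - (u (k + 1) - u k) := by
    intro k
    split_ifs with hk
    · subst hk
      rw [abs_of_nonneg (by linarith [hnonneg (k + 1) k.lt_succ_self])]
      ring
    · rw [abs_of_nonpos (sub_nonpos.2 (hstep k hk)), zero_sub]
  have hM : i < N + i + 1 := by omega
  calc ∑ k ∈ range N, |u (k + 1) - u k|
      ≤ ∑ k ∈ range (N + i + 1), |u (k + 1) - u k| :=
        sum_le_sum_of_subset_of_nonneg (range_subset_range.2 (by omega)) fun _ _ _ => abs_nonneg _
    _ = 2 * (u (i + 1) - u i) - u (N + i + 1) := by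
        rw [sum_congr rfl fun k _ => habs k, sum_sub_distrib, sum_ite_eq', if_pos (mem_range.2 hM),
          sum_range_sub, h0, sub_zero]
    _ ≤ 2 * (u (i + 1) - u i) := sub_le_self _ (hnonneg _ hM)

theorem tsum_sq_le_sq_tsum_abs {ι : Type*} {a : ι → ℝ} (ha : Summable fun j => |a j|) :
    ∑' j, a j ^ 2 ≤ (∑' j, |a j|) ^ 2 := by
  have hle : ∀ j, a j ^ 2 ≤ (∑' j, |a j|) * |a j| := fun j => by
    rw [← sq_abs, sq]
    exact mul_le_mul_of_nonneg_right (ha.le_tsum j fun _ _ => abs_nonneg _) (abs_nonneg _)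
  calc ∑' j, a j ^ 2 ≤ ∑' j, (∑' j, |a j|) * |a j| :=
        Summable.tsum_le_tsum hle (ha.mul_left _ |>.of_nonneg_of_le (fun _ => sq_nonneg _) hle)
          (ha.mul_left _)
    _ = (∑' j, |a j|) ^ 2 := by rw [tsum_mul_left, sq]

theorem tsum_int_comp_sub_eq_tsum_nat {f : ℝ → ℝ} (hf : f 0 = 0) {g : ℤ → ℝ}
    (hg : ∀ j ≤ 0, g j = 0) :
    ∑' k : ℤ, f (g (k + 1) - g k) = ∑' n : ℕ, f (g ↑(n + 1) - g n) := by
  push_cast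
  refine (Nat.cast_injective.tsum_eq fun k hk => ?_).symm
  by_contra hk'
  have hneg : k < 0 := by
    by_contra h
    exact hk' ⟨k.toNat, Int.toNat_of_nonneg (not_lt.1 h)⟩
  exact hk (by simp only [hg k hneg.le, hg (k + 1) (by omega), sub_self, hf])

open scoped Nat

namespace PoissonStein

noncomputable section

variable {x : ℝ} {i k n : ℕ}

def expPartial (x : ℝ) (n : ℕ) : ℝ := ∑ k ∈ range n, x ^ k / k !

def expTail (x : ℝ) (n : ℕ) : ℝ := ∑' k, x ^ (k + n) / (k + n)!

theorem expPartial_add_expTail (x : ℝ) (n : ℕ) : expPartial x n + expTail x n = Real.exp x := by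
  rw [Real.exp_eq_exp_ℝ, NormedSpace.exp_eq_tsum_div]
  exact (Real.summable_pow_div_factorial x).sum_add_tsum_nat_add n

theorem expPartial_succ (x : ℝ) (n : ℕ) :
    expPartial x (n + 1) = expPartial x n + x ^ n / n ! :=
  sum_range_succ _ _

theorem expTail_eq_add_expTail_succ (x : ℝ) (n : ℕ) :
    expTail x n = x ^ n / n ! + expTail x (n + 1) := by
  linarith [expPartial_add_expTail x n, expPartial_add_expTail x (n + 1), expPartial_succ x n]

theorem expPartial_nonneg (hx : 0 ≤ x) (n : ℕ) : 0 ≤ expPartial x n := by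
  unfold expPartial; positivity

theorem expTail_nonneg (hx : 0 ≤ x) (n : ℕ) : 0 ≤ expTail x n :=
  tsum_nonneg fun _ => by positivity

theorem mul_pow_div_factorial (x : ℝ) (k : ℕ) :
    x * (x ^ k / k !) = (k + 1) * (x ^ (k + 1) / (k + 1)!) := by
  rw [Nat.factorial_succ]
  push_cast
  field_simp
  ring

theorem mul_expPartial_le (hx : 0 ≤ x) (n : ℕ) :
    x * expPartial x n ≤ n * expPartial x (n + 1) := by
  rw [expPartial, expPartial, sum_range_succ', mul_sum, mul_add, mul_sum]
  simp_rw [mul_pow_div_factorial]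
  have hterm : ∀ k ∈ range n, ((k : ℝ) + 1) * (x ^ (k + 1) / (k + 1)!) ≤
      n * (x ^ (k + 1) / (k + 1)!) := fun k hk =>
    mul_le_mul_of_nonneg_right (by exact_mod_cast mem_range.1 hk) (by positivity)
  have : (0 : ℝ) ≤ n * (x ^ 0 / (0 : ℕ)!) := by positivity
  linarith [sum_le_sum hterm]

theorem mul_expTail_succ_le (hx : 0 ≤ x) (n : ℕ) :
    n * expTail x (n + 1) ≤ x * expTail x n := by
  have hs : ∀ m, Summable fun k => x ^ (k + m) / (k + m)! := fun m =>
    (summable_nat_add_iff m).2 (Real.summable_pow_div_factorial x)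
  rw [expTail, expTail, ← tsum_mul_left, ← tsum_mul_left]
  refine Summable.tsum_le_tsum (fun k => ?_) ((hs _).mul_left _) ((hs _).mul_left _)
  rw [mul_pow_div_factorial, ← add_assoc]
  push_cast
  exact mul_le_mul_of_nonneg_right (by linarith [(k.cast_nonneg : (0 : ℝ) ≤ k)]) (by positivity)

/-- `Po(x){< n} / (x · Po(x){n - 1})`; it vanishes at `n = 0` whatever `(0 - 1)!` is. -/
def lowerRatio (x : ℝ) (n : ℕ) : ℝ := (n - 1)! / x ^ n * expPartial x n

/-- `Po(x){≥ n} / (x · Po(x){n - 1})`. -/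
def upperRatio (x : ℝ) (n : ℕ) : ℝ := (n - 1)! / x ^ n * expTail x n

theorem lowerRatio_zero (x : ℝ) : lowerRatio x 0 = 0 := by
  simp [lowerRatio, expPartial]

theorem lowerRatio_nonneg (hx : 0 ≤ x) (n : ℕ) : 0 ≤ lowerRatio x n :=
  mul_nonneg (by positivity) (expPartial_nonneg hx n)

theorem upperRatio_nonneg (hx : 0 ≤ x) (n : ℕ) : 0 ≤ upperRatio x n :=
  mul_nonneg (by positivity) (expTail_nonneg hx n)

theorem lowerRatio_add_upperRatio (x : ℝ) (n : ℕ) :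
    lowerRatio x n + upperRatio x n = (n - 1)! / x ^ n * Real.exp x := by
  rw [lowerRatio, upperRatio, ← mul_add, expPartial_add_expTail]

theorem mul_factorial_div_pow_succ (hx : x ≠ 0) (n : ℕ) :
    x * ((n + 1 - 1)! / x ^ (n + 1)) = n ! / x ^ n := by
  rw [Nat.add_sub_cancel, pow_succ]
  field_simp

theorem natCast_mul_factorial_pred_div_pow (hn : n ≠ 0) :
    (n : ℝ) * ((n - 1)! / x ^ n) = n ! / x ^ n := by
  rw [← mul_div_assoc, ← Nat.cast_mul, Nat.mul_factorial_pred hn]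

theorem mul_lowerRatio_succ_sub (hx : x ≠ 0) (n : ℕ) :
    x * lowerRatio x (n + 1) - n * lowerRatio x n = 1 := by
  rcases eq_or_ne n 0 with rfl | hn
  · simp [lowerRatio, expPartial, hx]
  rw [lowerRatio, lowerRatio, ← mul_assoc, ← mul_assoc, mul_factorial_div_pow_succ hx,
    natCast_mul_factorial_pred_div_pow hn, expPartial_succ]
  field_simp
  ring

theorem mul_upperRatio_succ_sub (hx : x ≠ 0) (hn : n ≠ 0) :
    x * upperRatio x (n + 1) - n * upperRatio x n = -1 := by
  rw [upperRatio, upperRatio, ← mul_assoc, ← mul_assoc, mul_factorial_div_pow_succ hx,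
    natCast_mul_factorial_pred_div_pow hn, expTail_eq_add_expTail_succ x n]
  field_simp
  ring

theorem mul_upperRatio_succ_add (hx : x ≠ 0) (n : ℕ) :
    x * upperRatio x (n + 1) + n * lowerRatio x n = n ! / x ^ n * Real.exp x - 1 := by
  have hnl : (n : ℝ) * lowerRatio x n = n ! / x ^ n * expPartial x n := by
    rcases eq_or_ne n 0 with rfl | hn
    · simp [lowerRatio_zero, expPartial]
    rw [lowerRatio, ← mul_assoc, natCast_mul_factorial_pred_div_pow hn]
  rw [hnl, upperRatio, ← mul_assoc, mul_factorial_div_pow_succ hx, ← expPartial_add_expTail x n,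
    expTail_eq_add_expTail_succ x n]
  field_simp
  ring

theorem lowerRatio_le_succ (hx : 0 < x) (n : ℕ) : lowerRatio x n ≤ lowerRatio x (n + 1) := by
  rcases eq_or_ne n 0 with rfl | hn
  · rw [lowerRatio_zero]; exact lowerRatio_nonneg hx.le 1
  have h := mul_le_mul_of_nonneg_left (mul_expPartial_le hx.le n)
    (by positivity : (0 : ℝ) ≤ (n - 1)! / x ^ (n + 1))
  rw [lowerRatio, lowerRatio, Nat.add_sub_cancel, ← Nat.mul_factorial_pred hn]
  calc (n - 1)! / x ^ n * expPartial x n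
      = (n - 1)! / x ^ (n + 1) * (x * expPartial x n) := by rw [pow_succ]; field_simp
    _ ≤ (n - 1)! / x ^ (n + 1) * (n * expPartial x (n + 1)) := h
    _ = ↑(n * (n - 1)!) / x ^ (n + 1) * expPartial x (n + 1) := by push_cast; ring

theorem upperRatio_succ_le (hx : 0 < x) (hn : n ≠ 0) :
    upperRatio x (n + 1) ≤ upperRatio x n := by
  have h := mul_le_mul_of_nonneg_left (mul_expTail_succ_le hx.le n)
    (by positivity : (0 : ℝ) ≤ (n - 1)! / x ^ (n + 1))
  rw [upperRatio, upperRatio, Nat.add_sub_cancel, ← Nat.mul_factorial_pred hn]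
  calc ↑(n * (n - 1)!) / x ^ (n + 1) * expTail x (n + 1)
      = (n - 1)! / x ^ (n + 1) * (n * expTail x (n + 1)) := by push_cast; ring
    _ ≤ (n - 1)! / x ^ (n + 1) * (x * expTail x n) := h
    _ = (n - 1)! / x ^ n * expTail x n := by rw [pow_succ]; field_simp

def poissonProb (x : ℝ) (i : ℕ) : ℝ := Real.exp (-x) * x ^ i / i !

theorem poissonProb_mul_factorial_div_pow_mul_exp (hx : x ≠ 0) (i : ℕ) :
    poissonProb x i * (i ! / x ^ i * Real.exp x) = 1 := by
  rw [poissonProb]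
  field_simp
  rw [← Real.exp_add, neg_add_cancel, Real.exp_zero]

def steinSol (x : ℝ) (i n : ℕ) : ℝ :=
  if n ≤ i then -(poissonProb x i * lowerRatio x n) else poissonProb x i * upperRatio x n

theorem steinSol_zero (x : ℝ) (i : ℕ) : steinSol x i 0 = 0 := by
  simp [steinSol, lowerRatio_zero]

theorem steinSol_of_le (hn : n ≤ i) : steinSol x i n = -(poissonProb x i * lowerRatio x n) :=
  if_pos hn

theorem steinSol_of_lt (hn : i < n) : steinSol x i n = poissonProb x i * upperRatio x n :=
  if_neg hn.not_ge

theorem steinSol_stein (hx : x ≠ 0) (i n : ℕ) :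
    x * steinSol x i (n + 1) - n * steinSol x i n =
      (if n = i then 1 else 0) - poissonProb x i := by
  rcases lt_trichotomy n i with h | rfl | h
  · rw [steinSol_of_le h, steinSol_of_le h.le, if_neg h.ne]
    linear_combination (-poissonProb x i) * mul_lowerRatio_succ_sub hx n
  · rw [steinSol_of_lt n.lt_succ_self, steinSol_of_le le_rfl, if_pos rfl]
    linear_combination poissonProb x n * mul_upperRatio_succ_add hx n
      + poissonProb_mul_factorial_div_pow_mul_exp hx n
  · rw [steinSol_of_lt (h.trans n.lt_succ_self), steinSol_of_lt h, if_neg h.ne']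
    linear_combination poissonProb x i * mul_upperRatio_succ_sub hx (by omega : n ≠ 0)

theorem eq_steinSol {g : ℕ → ℝ} (hx : x ≠ 0) (h0 : g 0 = 0)
    (hg : ∀ n : ℕ, x * g (n + 1) - n * g n = (if n = i then 1 else 0) - poissonProb x i) :
    ∀ n, g n = steinSol x i n := by
  intro n
  induction n with
  | zero => rw [h0, steinSol_zero]
  | succ n ih =>
    refine mul_left_cancel₀ hx ?_
    linear_combination hg n - steinSol_stein hx i n + n * ih

theorem steinSol_succ_le (hx : 0 < x) (hk : k ≠ i) : steinSol x i (k + 1) ≤ steinSol x i k := by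
  have hp : 0 ≤ poissonProb x i := by unfold poissonProb; positivity
  rcases hk.lt_or_gt with h | h
  · rw [steinSol_of_le h, steinSol_of_le h.le, neg_le_neg_iff]
    exact mul_le_mul_of_nonneg_left (lowerRatio_le_succ hx k) hp
  · rw [steinSol_of_lt (h.trans k.lt_succ_self), steinSol_of_lt h]
    exact mul_le_mul_of_nonneg_left (upperRatio_succ_le hx (by omega)) hp

theorem steinSol_nonneg (hx : 0 < x) (hk : i < k) : 0 ≤ steinSol x i k := by
  rw [steinSol_of_lt hk]
  exact mul_nonneg (by unfold poissonProb; positivity) (upperRatio_nonneg hx.le k)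

theorem steinSol_succ_sub_self_le (hx : 0 < x) (i : ℕ) :
    steinSol x i (i + 1) - steinSol x i i ≤ 1 / x := by
  have hp : 0 ≤ poissonProb x i := by unfold poissonProb; positivity
  rw [steinSol_of_lt i.lt_succ_self, steinSol_of_le le_rfl, sub_neg_eq_add, ← mul_add]
  calc poissonProb x i * (upperRatio x (i + 1) + lowerRatio x i)
      ≤ poissonProb x i * (upperRatio x (i + 1) + lowerRatio x (i + 1)) := by
        gcongr; exact lowerRatio_le_succ hx i
    _ = poissonProb x i * (i ! / x ^ i * Real.exp x) / x := by
        rw [add_comm, lowerRatio_add_upperRatio, Nat.add_sub_cancel, pow_succ]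
        field_simp
    _ = 1 / x := by rw [poissonProb_mul_factorial_div_pow_mul_exp hx.ne']

end

end PoissonStein

open PoissonStein

/-- Lemma 3.7: bounds on the sums of `|Δg|` and `(Δg)²` for the solution `g` of the
Stein equation for the Poisson distribution `Po(λ')` and the singleton set `{i}`. -/
theorem poisson_stein_solution_delta_sums
    (lam : ℝ) (hlam : 0 < lam) (i : ℕ) (g : ℤ → ℝ)
    (hg0 : ∀ j : ℤ, j ≤ 0 → g j = 0)
    (hstein : ∀ j : ℤ, 0 ≤ j →
      lam * g (j + 1) - j * g j =
        (if j = (i : ℤ) then 1 else 0) - Real.exp (-lam) * lam ^ i / (Nat.factorial i)) :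
    (∑' k : ℤ, |g (k + 1) - g k|) ≤ 2 / lam ∧
      (∑' k : ℤ, (g (k + 1) - g k) ^ 2) ≤ 4 / lam ^ 2 := by
  set u := steinSol lam i
  have hgu : ∀ n : ℕ, g n = u n := eq_steinSol hlam.ne' (hg0 0 le_rfl) fun n => by
    simpa [poissonProb] using hstein n n.cast_nonneg
  have hpartial (N : ℕ) : ∑ k ∈ range N, |u (k + 1) - u k| ≤ 2 / lam := by
    refine (sum_range_abs_sub_le_of_single_ascent (steinSol_zero lam i)
      (fun _ => steinSol_succ_le hlam) (fun _ => steinSol_nonneg hlam) N).trans ?_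
    linarith [steinSol_succ_sub_self_le hlam i, show 2 / lam = 2 * (1 / lam) by ring]
  have habs : ∑' n : ℕ, |u (n + 1) - u n| ≤ 2 / lam :=
    Real.tsum_le_of_sum_range_le (fun _ => abs_nonneg _) hpartial
  have hsummable := summable_of_sum_range_le (fun _ => abs_nonneg _) hpartial
  simp only [tsum_int_comp_sub_eq_tsum_nat abs_zero hg0,
    tsum_int_comp_sub_eq_tsum_nat (f := (· ^ 2)) (zero_pow two_ne_zero) hg0, hgu]
  refine ⟨habs, ?_⟩
  calc ∑' n : ℕ, (u (n + 1) - u n) ^ 2 ≤ (∑' n : ℕ, |u (n + 1) - u n|) ^ 2 :=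
        tsum_sq_le_sq_tsum_abs hsummable
    _ ≤ (2 / lam) ^ 2 := pow_le_pow_left₀ (tsum_nonneg fun _ => abs_nonneg _) habs 2
    _ = 4 / lam ^ 2 := by ring
end

section
/- For any integer-valued random variable W with E W = μ and Var W = σ² ∈ (0, ∞), it holds that max_{k ∈ ℤ} P[W = k] ≤ d_TV(L(W), TP(μ, σ²)) + 1/(2.3 σ). -/
/-! The mass of `TP(μ, σ²)` at `k` is a Poisson point mass `e^{-λ} λⁿ / n!` with
`λ = σ² + γ ≥ σ²`, so `P[W = k] ≤ d_TV + e^{-λ} λⁿ / n!` and it remains to bound the Poisson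
point mass by `1 / (2.3 √λ)`. After squaring, `λ^{2n+1} e^{-2λ}` is maximal at `λ = n + 1/2`,
which reduces the bound to `2.3² ((n + 1/2) / e)^{2n+1} ≤ (n!)²`. This follows from Stirling's
lower bound `n! ≥ √(2πn) (n/e)ⁿ` for `n ≥ 3` and is checked numerically for `n ≤ 2`. -/

open MeasureTheory ProbabilityTheory

/-- Point probabilities of the translated Poisson distribution `TP(μ, σ²)`:
the law of `⌊μ - σ²⌋ + Z` where `Z ~ Po(σ² + γ)` and `γ = ⟨μ - σ²⟩`. -/
noncomputable def tpPMF (μ σ2 : ℝ) (k : ℤ) : ℝ :=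
  if 0 ≤ k - ⌊μ - σ2⌋ then
    Real.exp (-(σ2 + Int.fract (μ - σ2))) * (σ2 + Int.fract (μ - σ2)) ^ (k - ⌊μ - σ2⌋).toNat /
      (Nat.factorial (k - ⌊μ - σ2⌋).toNat)
  else 0

/-- The translated Poisson distribution `TP(μ, σ²)` as a measure on `ℤ`. -/
noncomputable def TP (μ σ2 : ℝ) : Measure ℤ :=
  Measure.sum (fun k : ℤ => ENNReal.ofReal (tpPMF μ σ2 k) • Measure.dirac k)

/-- Total variation distance between two measures on `ℤ`. -/
noncomputable def dTV (P Q : Measure ℤ) : ℝ :=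
  ⨆ A : Set ℤ, |(P A).toReal - (Q A).toReal|

open Real
open scoped Nat

lemma mul_exp_neg_div_le (x : ℝ) {c : ℝ} (hc : 0 < c) : x * exp (-(x / c)) ≤ c / exp 1 := by
  calc x * exp (-(x / c)) = c * (x / c * exp (-(x / c))) := by field_simp
    _ ≤ c * exp (-1) := by gcongr; exact mul_exp_neg_le_exp_neg_one _
    _ = c / exp 1 := by rw [exp_neg, div_eq_mul_inv]

lemma sq_mul_div_exp_pow_le_sq_factorial (n : ℕ) :
    2.3 ^ 2 * (((n : ℝ) + 1 / 2) / exp 1) ^ (2 * n + 1) ≤ (n ! : ℝ) ^ 2 := by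
  rcases lt_or_ge n 3 with hn | hn
  · have he : (2.718 : ℝ) < exp 1 := lt_trans (by norm_num) exp_one_gt_d9
    calc 2.3 ^ 2 * (((n : ℝ) + 1 / 2) / exp 1) ^ (2 * n + 1)
        ≤ 2.3 ^ 2 * (((n : ℝ) + 1 / 2) / 2.718) ^ (2 * n + 1) := by gcongr
      _ ≤ (n ! : ℝ) ^ 2 := by interval_cases n <;> norm_num [Nat.factorial]
  · set c : ℝ := n + 1 / 2
    have hn' : (3 : ℝ) ≤ n := by exact_mod_cast hn
    have hstirling : 2 * π * n * ((n : ℝ) / exp 1) ^ (2 * n) ≤ (n ! : ℝ) ^ 2 := by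
      have := pow_le_pow_left₀ (by positivity) (Stirling.le_factorial_stirling n) 2
      rwa [mul_pow, sq_sqrt (by positivity), ← pow_mul, mul_comm n 2] at this
    have hratio : (c / n) ^ (2 * n) ≤ exp 1 := by
      convert one_add_inv_pow_le_exp (n := 2 * n) using 2
      push_cast
      field_simp
      ring
    have hconst : 2.3 ^ 2 * c ≤ 2 * π * n := by simp only [c]; nlinarith [pi_gt_d2]
    calc 2.3 ^ 2 * (c / exp 1) ^ (2 * n + 1)
        = 2.3 ^ 2 * c / exp 1 * (c / n) ^ (2 * n) * ((n : ℝ) / exp 1) ^ (2 * n) := by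
          have : (n : ℝ) ≠ 0 := by positivity
          rw [div_pow, div_pow, div_pow]
          field_simp
          ring
      _ ≤ 2 * π * n / exp 1 * exp 1 * ((n : ℝ) / exp 1) ^ (2 * n) := by gcongr
      _ = 2 * π * n * ((n : ℝ) / exp 1) ^ (2 * n) := by field_simp
      _ ≤ (n ! : ℝ) ^ 2 := hstirling

lemma exp_neg_mul_pow_div_factorial_le {r : ℝ} (hr : 0 < r) (n : ℕ) :
    exp (-r) * r ^ n / n ! ≤ 1 / (2.3 * √r) := by
  have hfac : (0 : ℝ) < n ! := by positivity
  have hc : (0 : ℝ) < n + 1 / 2 := by positivity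
  rw [div_le_div_iff₀ hfac (by positivity), one_mul]
  refine (pow_le_pow_iff_left₀ (by positivity) hfac.le two_ne_zero).1 ?_
  have hexp : exp (-(r / (n + 1 / 2))) ^ (2 * n + 1) = exp (-r) ^ 2 := by
    rw [← exp_nat_mul, ← exp_nat_mul]
    congr 1
    push_cast
    field_simp
  calc (exp (-r) * r ^ n * (2.3 * √r)) ^ 2
      = 2.3 ^ 2 * (r * exp (-(r / (n + 1 / 2)))) ^ (2 * n + 1) := by
        rw [mul_pow r, hexp, mul_pow, mul_pow, mul_pow, sq_sqrt hr.le]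
        ring
    _ ≤ 2.3 ^ 2 * (((n : ℝ) + 1 / 2) / exp 1) ^ (2 * n + 1) := by
        gcongr
        exact mul_exp_neg_div_le r hc
    _ ≤ (n ! : ℝ) ^ 2 := sq_mul_div_exp_pow_le_sq_factorial n

section TranslatedPoisson

variable (μ : ℝ) {σ2 : ℝ}

lemma tpPMF_nonneg (hσ2 : 0 ≤ σ2) (k : ℤ) : 0 ≤ tpPMF μ σ2 k := by
  have := Int.fract_nonneg (μ - σ2)
  unfold tpPMF
  split_ifs <;> positivity

lemma tpPMF_natCast_add_floor (n : ℕ) :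
    tpPMF μ σ2 (n + ⌊μ - σ2⌋) =
      exp (-(σ2 + Int.fract (μ - σ2))) * (σ2 + Int.fract (μ - σ2)) ^ n / n ! := by
  simp [tpPMF]

lemma tpPMF_of_lt_floor {k : ℤ} (hk : k < ⌊μ - σ2⌋) : tpPMF μ σ2 k = 0 := by
  simp [tpPMF, hk]

lemma hasSum_tpPMF (hσ2 : 0 ≤ σ2) : HasSum (tpPMF μ σ2) 1 := by
  have hrate : 0 ≤ σ2 + Int.fract (μ - σ2) := add_nonneg hσ2 (Int.fract_nonneg _)
  have hshift : Function.Injective (fun n : ℕ => (n : ℤ) + ⌊μ - σ2⌋) := fun a b h => by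
    simpa using h
  rw [← hshift.hasSum_iff]
  · convert hasSum_one_poissonMeasure ⟨_, hrate⟩ using 2 with n
    exact tpPMF_natCast_add_floor μ n
  · intro k hk
    refine tpPMF_of_lt_floor μ (not_le.1 fun hle => hk ⟨(k - ⌊μ - σ2⌋).toNat, ?_⟩)
    dsimp only
    omega

lemma isProbabilityMeasure_TP (hσ2 : 0 ≤ σ2) : IsProbabilityMeasure (TP μ σ2) :=
  (hasSum_tpPMF μ hσ2).isProbabilityMeasure_sum_dirac (tpPMF_nonneg μ hσ2)

lemma TP_real_singleton (hσ2 : 0 ≤ σ2) (k : ℤ) : (TP μ σ2).real {k} = tpPMF μ σ2 k := by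
  rw [measureReal_def, TP, Measure.sum_smul_dirac_singleton,
    ENNReal.toReal_ofReal (tpPMF_nonneg μ hσ2 k)]

lemma tpPMF_le (hσ2 : 0 < σ2) (k : ℤ) : tpPMF μ σ2 k ≤ 1 / (2.3 * √σ2) := by
  have := Int.fract_nonneg (μ - σ2)
  unfold tpPMF
  split_ifs
  · refine (exp_neg_mul_pow_div_factorial_le (by positivity) _).trans ?_
    gcongr
    linarith
  · positivity

end TranslatedPoisson

lemma measureReal_le_dTV_add (P Q : Measure ℤ) [IsFiniteMeasure P] [IsFiniteMeasure Q]
    (A : Set ℤ) : P.real A ≤ dTV P Q + Q.real A := by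
  have hbdd : BddAbove (Set.range fun B : Set ℤ => |P.real B - Q.real B|) := by
    refine ⟨P.real Set.univ + Q.real Set.univ, Set.forall_mem_range.2 fun B => ?_⟩
    have hP := measureReal_mono (μ := P) (Set.subset_univ B)
    have hQ := measureReal_mono (μ := Q) (Set.subset_univ B)
    rw [abs_sub_le_iff]
    constructor <;>
      linarith [measureReal_nonneg (μ := P) (s := B), measureReal_nonneg (μ := Q) (s := B)]
  have hA : |P.real A - Q.real A| ≤ dTV P Q := le_ciSup hbdd A
  linarith [le_abs_self (P.real A - Q.real A)]

theorem qmax_le_dTV_add_general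
    {Ω : Type*} [MeasurableSpace Ω] (P : Measure Ω) [IsProbabilityMeasure P]
    (W : Ω → ℤ) (hW : Measurable W)
    (μ σ2 : ℝ) (hσ2 : 0 < σ2) :
    (⨆ k : ℤ, (P {ω | W ω = k}).toReal) ≤
      dTV (Measure.map W P) (TP μ σ2) + 1 / (2.3 * Real.sqrt σ2) := by
  have := Measure.isProbabilityMeasure_map (μ := P) hW.aemeasurable
  have := isProbabilityMeasure_TP μ hσ2.le
  refine ciSup_le fun k => ?_
  calc (P {ω | W ω = k}).toReal = (P.map W).real {k} := by
        rw [measureReal_def, Measure.map_apply hW (measurableSet_singleton k)]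
        rfl
    _ ≤ dTV (P.map W) (TP μ σ2) + (TP μ σ2).real {k} := measureReal_le_dTV_add _ _ _
    _ ≤ dTV (P.map W) (TP μ σ2) + 1 / (2.3 * √σ2) := by
        rw [TP_real_singleton μ hσ2.le]
        gcongr
        exact tpPMF_le μ hσ2 k

/-- Corollary 3.9: a bound on the maximal point probability of an integer-valued
random variable in terms of its translated Poisson approximation error. -/
theorem qmax_le_dTV_add
    {Ω : Type*} [MeasurableSpace Ω] (P : Measure Ω) [IsProbabilityMeasure P]
    (W : Ω → ℤ) (hW : Measurable W)
    (μ σ2 : ℝ) (hσ2 : 0 < σ2)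
    (hL2 : MemLp (fun ω => (W ω : ℝ)) 2 P)
    (hmean : ∫ ω, (W ω : ℝ) ∂P = μ)
    (hvar : variance (fun ω => (W ω : ℝ)) P = σ2) :
    (⨆ k : ℤ, (P {ω | W ω = k}).toReal) ≤
      dTV (Measure.map W P) (TP μ σ2) + 1 / (2.3 * Real.sqrt σ2) :=
  qmax_le_dTV_add_general P W hW μ σ2 hσ2
end

section
/- For any μ ∈ ℝ, any σ² > 0 and any k ∈ ℤ, the point probability of the translated Poisson distribution satisfies TP(μ, σ²){k} · |k − μ| ≤ 1. -/
open MeasureTheory ProbabilityTheory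

section Aux
open Real

lemma stirling_lower (n : ℕ) : √π * (√(2 * n : ℝ) * ((n : ℝ) / exp 1) ^ n) ≤ (Nat.factorial n : ℝ) := by
  rcases n with _ | m
  · simp
  have h1 : √π ≤ Stirling.stirlingSeq (m + 1) :=
    Stirling.stirlingSeq'_antitone.le_of_tendsto
      (Stirling.tendsto_stirlingSeq_sqrt_pi.comp (Filter.tendsto_add_atTop_nat 1)) m
  have h2 : (0:ℝ) < √(2 * ((m+1:ℕ):ℝ)) * ((((m+1:ℕ):ℝ)) / exp 1) ^ (m+1) := by positivity
  rw [Stirling.stirlingSeq, le_div_iff₀ h2] at h1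
  exact h1

lemma xexp_le (x : ℝ) : x * exp (-x) ≤ exp (-1) := by
  have h := Real.add_one_le_exp (x - 1)
  have h2 : exp (x-1) = exp x * exp (-1) := by rw [← Real.exp_add]; ring_nf
  have h3 : exp (-x) = (exp x)⁻¹ := Real.exp_neg x
  have h4 : (0:ℝ) < exp x := exp_pos x
  rw [h3, mul_inv_le_iff₀ h4]
  nlinarith [exp_pos (-1)]

lemma sexp_le (s : ℝ) (hs : 0 ≤ s) : s * exp (-s^2) ≤ √(1/(2*exp 1)) := by
  rw [Real.le_sqrt (by positivity) (by positivity)]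
  have h := xexp_le (2*s^2)
  have h2 : exp (-(2*s^2)) = exp (-s^2) * exp (-s^2) := by rw [← Real.exp_add]; ring_nf
  have h3 : exp (-1) = 1 / exp 1 := by rw [Real.exp_neg]; ring
  rw [h2, h3] at h
  have e1 : (0:ℝ) < exp 1 := exp_pos 1
  have h5 : exp 1 * (2*s^2*(exp (-s^2)*exp (-s^2))) ≤ 1 := by
    calc exp 1 * (2*s^2*(exp (-s^2)*exp (-s^2))) ≤ exp 1 * (1/exp 1) :=
          mul_le_mul_of_nonneg_left h e1.le
      _ = 1 := by field_simp
  rw [mul_pow, le_div_iff₀ (by positivity)]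
  nlinarith

lemma poisson_main (n : ℕ) (hn : 1 ≤ n) {l : ℝ} (hl : 0 < l) (h5 : l ≤ 5*n) :
    exp (-l) * l^n * |(n:ℝ) - l| ≤ (Nat.factorial n : ℝ) := by
  have hn0 : (0:ℝ) < n := by exact_mod_cast hn
  set q : ℝ := √(l/n) with hqdef
  have hq0 : 0 < q := Real.sqrt_pos.mpr (by positivity)
  have hq2 : q^2 = l/n := Real.sq_sqrt (by positivity)
  have hlq : l = n * q^2 := by rw [hq2]; field_simp
  have hq25 : q^2 ≤ 5 := by rw [hq2, div_le_iff₀ hn0]; linarith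
  have hq3 : q ≤ 3 := by nlinarith
  have pow_bound : l^n ≤ (n:ℝ)^n * exp (2*(q-1))^n := by
    rw [hlq, mul_pow]
    apply mul_le_mul_of_nonneg_left _ (by positivity : (0:ℝ) ≤ (n:ℝ)^n)
    apply pow_le_pow_left₀ (sq_nonneg q)
    calc q^2 = exp (log (q^2)) := (Real.exp_log (by positivity)).symm
      _ ≤ exp (2*(q-1)) := by
          apply Real.exp_le_exp.mpr
          have hlq2 : log (q^2) = 2 * log q := by
            rw [sq, Real.log_mul (ne_of_gt hq0) (ne_of_gt hq0)]; ring
          rw [hlq2]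
          nlinarith [Real.log_le_sub_one_of_pos hq0]
  have exp_pow : exp (2*(q-1))^n = exp (2*n*(q-1)) := by
    rw [← Real.exp_nat_mul]; ring_nf
  set s : ℝ := √n * |q - 1| with hsdef
  have hs0 : 0 ≤ s := by positivity
  have hs2 : s^2 = n * (q-1)^2 := by
    rw [hsdef, mul_pow, sq_abs, Real.sq_sqrt hn0.le]
  have hexpeq : exp (-(n:ℝ)) * exp (-s^2) = exp (2*n*(q-1)) * exp (-l) := by
    rw [← Real.exp_add, ← Real.exp_add, hs2, hlq]; ring_nf
  have hmm : √(n:ℝ) * √(n:ℝ) = n := Real.mul_self_sqrt hn0.le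
  have habs : |(n:ℝ) - l| = √n * s * (1 + q) := by
    have h1 : |(n:ℝ) - l| = n * (|q - 1| * (1+q)) := by
      rw [hlq]
      have h1' : (n:ℝ) - n*q^2 = n * ((q-1)*(-(1+q))) := by ring
      rw [h1', abs_mul, abs_mul, abs_of_nonneg hn0.le, abs_neg,
        abs_of_nonneg (by linarith : (0:ℝ) ≤ 1+q)]
    rw [h1, hsdef,
      show √(n:ℝ) * (√(n:ℝ) * |q - 1|) * (1+q) = (√(n:ℝ) * √(n:ℝ)) * (|q - 1| * (1+q)) from by ring, hmm]
  have key : exp (-l) * l^n * |(n:ℝ) - l|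
      ≤ (n:ℝ)^n * exp (-(n:ℝ)) * √n * ((1+q) * (s * exp (-s^2))) := by
    rw [habs]
    calc exp (-l) * l^n * (√n * s * (1+q))
        ≤ exp (-l) * ((n:ℝ)^n * exp (2*n*(q-1))) * (√n * s * (1+q)) := by
          rw [← exp_pow]
          apply mul_le_mul_of_nonneg_right _ (by positivity)
          exact mul_le_mul_of_nonneg_left pow_bound (Real.exp_pos (-l)).le
      _ = (n:ℝ)^n * (exp (2*n*(q-1)) * exp (-l)) * √n * s * (1+q) := by ring
      _ = (n:ℝ)^n * (exp (-(n:ℝ)) * exp (-s^2)) * √n * s * (1+q) := by rw [hexpeq]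
      _ = (n:ℝ)^n * exp (-(n:ℝ)) * √n * ((1+q) * (s * exp (-s^2))) := by ring
  have hq4 : (1+q) ≤ 4 := by linarith
  have hcomb : (1+q) * (s * exp (-s^2)) ≤ 4 * √(1/(2*exp 1)) :=
    mul_le_mul hq4 (sexp_le s hs0) (by positivity) (by norm_num)
  have hnum : (4:ℝ) * √(1/(2*exp 1)) ≤ √2 * √π := by
    rw [← Real.sqrt_mul (by norm_num : (0:ℝ) ≤ 2) π]
    have h4 : (4:ℝ) = √16 := by
      rw [show (16:ℝ) = 4^2 by norm_num, Real.sqrt_sq (by norm_num : (0:ℝ) ≤ 4)]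
    rw [h4, ← Real.sqrt_mul (by norm_num : (0:ℝ) ≤ 16)]
    apply Real.sqrt_le_sqrt
    have he : (2:ℝ) ≤ exp 1 := by nlinarith [Real.add_one_le_exp 1]
    have hpi : (3:ℝ) ≤ π := Real.pi_gt_three.le
    have h8 : (16:ℝ)*(1/(2*exp 1)) ≤ 4 := by
      rw [show (16:ℝ)*(1/(2*exp 1)) = 8/exp 1 by field_simp; ring, div_le_iff₀ (exp_pos 1)]
      linarith
    linarith
  have epow : ((n:ℝ)/exp 1)^n = (n:ℝ)^n * exp (-(n:ℝ)) := by
    rw [div_pow, Real.exp_neg, ← Real.exp_one_pow, div_eq_mul_inv]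
  calc exp (-l) * l^n * |(n:ℝ) - l|
      ≤ (n:ℝ)^n * exp (-(n:ℝ)) * √n * ((1+q) * (s * exp (-s^2))) := key
    _ ≤ (n:ℝ)^n * exp (-(n:ℝ)) * √n * (√2 * √π) := by
        apply mul_le_mul_of_nonneg_left (hcomb.trans hnum) (by positivity)
    _ = √π * (√2 * √n * ((n:ℝ)^n * exp (-(n:ℝ)))) := by ring
    _ = √π * (√(2*n : ℝ) * ((n:ℝ)/exp 1)^n) := by
        rw [Real.sqrt_mul (by norm_num : (0:ℝ) ≤ 2), epow]
    _ ≤ (Nat.factorial n : ℝ) := stirling_lower n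

lemma fact_lower (n : ℕ) (hn : 1 ≤ n) : (n:ℝ)^n * exp (-(n:ℝ)) ≤ (Nat.factorial n : ℝ) := by
  have hn0 : (0:ℝ) < n := by exact_mod_cast hn
  have hn1 : (1:ℝ) ≤ n := by exact_mod_cast hn
  have h1 : (1:ℝ) ≤ √π := by
    rw [show (1:ℝ) = √1 from (Real.sqrt_one).symm]
    exact Real.sqrt_le_sqrt (by linarith [Real.pi_gt_three])
  have h2 : (1:ℝ) ≤ √(2*n : ℝ) := by
    rw [show (1:ℝ) = √1 from (Real.sqrt_one).symm]
    exact Real.sqrt_le_sqrt (by linarith)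
  have epow : ((n:ℝ)/exp 1)^n = (n:ℝ)^n * exp (-(n:ℝ)) := by
    rw [div_pow, Real.exp_neg, ← Real.exp_one_pow, div_eq_mul_inv]
  calc (n:ℝ)^n * exp (-(n:ℝ)) = 1 * (1 * ((n:ℝ)^n * exp (-(n:ℝ)))) := by ring
    _ ≤ √π * (√(2*n : ℝ) * ((n:ℝ)/exp 1)^n) := by
        rw [epow]
        apply mul_le_mul h1 _ (by positivity) (by positivity)
        apply mul_le_mul h2 le_rfl (by positivity) (by positivity)
    _ ≤ (Nat.factorial n : ℝ) := stirling_lower n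

lemma poisson_tail (n : ℕ) (hn : 1 ≤ n) {l : ℝ} (h5 : 5*(n:ℝ) ≤ l) :
    exp (-l) * l^n * |(n:ℝ) - l| ≤ (Nat.factorial n : ℝ) := by
  have hn0 : (0:ℝ) < n := by exact_mod_cast hn
  have hn1 : (1:ℝ) ≤ n := by exact_mod_cast hn
  have hl : 0 < l := lt_of_lt_of_le (by positivity) h5
  have habs : |(n:ℝ) - l| = l - n := by
    rw [abs_sub_comm, abs_of_nonneg (by linarith)]
  have step0 : exp (-l) * l^n * |(n:ℝ) - l| ≤ exp (-l) * l^(n+1) := by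
    rw [habs, pow_succ]
    have : exp (-l) * l^n * (l - n) ≤ exp (-l) * l^n * l := by
      apply mul_le_mul_of_nonneg_left (by linarith) (by positivity)
    linarith
  have step1 : exp (-l) * l^(n+1) ≤ exp (-(5*(n:ℝ))) * (5*n)^(n+1) := by
    have h51 : l^(n+1) ≤ (5*(n:ℝ))^(n+1) * exp (l - 5*n) := by
      have hr : l = (5*n) * (l/(5*n)) := by field_simp
      have hrb : l/(5*n) ≤ exp (l/(5*n) - 1) := by
        linarith [Real.add_one_le_exp (l/(5*n) - 1)]
      calc l^(n+1) = (5*(n:ℝ))^(n+1) * (l/(5*n))^(n+1) := by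
            rw [← mul_pow]; rw [← hr]
        _ ≤ (5*(n:ℝ))^(n+1) * exp (l/(5*n) - 1)^(n+1) := by
            apply mul_le_mul_of_nonneg_left _ (by positivity)
            exact pow_le_pow_left₀ (by positivity) hrb _
        _ ≤ (5*(n:ℝ))^(n+1) * exp (l - 5*n) := by
            apply mul_le_mul_of_nonneg_left _ (by positivity)
            rw [← Real.exp_nat_mul]
            apply Real.exp_le_exp.mpr
            have hd : (0:ℝ) ≤ l - 5*n := by linarith
            have hq : ((n:ℕ)+1 : ℝ) * (l/(5*n) - 1) = ((n:ℝ)+1)/(5*n) * (l - 5*n) := by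
              field_simp
            push_cast
            rw [hq]
            have : ((n:ℝ)+1)/(5*n) ≤ 1 := by
              rw [div_le_one (by positivity)]; linarith
            nlinarith
    calc exp (-l) * l^(n+1) ≤ exp (-l) * ((5*(n:ℝ))^(n+1) * exp (l - 5*n)) :=
          mul_le_mul_of_nonneg_left h51 (exp_pos _).le
      _ = exp (-(5*(n:ℝ))) * (5*n)^(n+1) := by
          rw [show exp (-l) * ((5*(n:ℝ))^(n+1) * exp (l - 5*n))
              = (exp (-l) * exp (l - 5*(n:ℝ))) * (5*(n:ℝ))^(n+1) from by ring,
            ← Real.exp_add]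
          ring_nf
  have step2 : exp (-(5*(n:ℝ))) * (5*(n:ℝ))^(n+1) ≤ (n:ℝ)^n * exp (-(n:ℝ)) := by
    have key : (5:ℝ)^(n+1) * n ≤ exp (4*(n:ℝ)) := by
      have he50 : (50:ℝ) ≤ exp 4 := by
        have h27 : (2.7182818283:ℝ) < exp 1 := Real.exp_one_gt_d9
        have hee : exp 4 = (exp 1)^4 := by
          rw [← Real.exp_nat_mul]; norm_num
        have e1p : (0:ℝ) < exp 1 := exp_pos 1
        have h2 : (7.3:ℝ) ≤ exp 1 ^ 2 := by nlinarith
        have h4 : exp 1 ^ 4 = (exp 1 ^ 2)^2 := by ring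
        rw [hee, h4]; nlinarith
      have h10 : (5:ℝ)^(n+1) * n ≤ 50^n := by
        have hb : (1:ℝ) + (n:ℝ)*9 ≤ (1+9)^n := one_add_mul_le_pow (by norm_num) n
        have : (50:ℝ)^n = 5^n * 10^n := by rw [← mul_pow]; norm_num
        rw [this, pow_succ]
        have h5n : (5:ℝ)^n * (5 * n) ≤ 5^n * 10^n := by
          apply mul_le_mul_of_nonneg_left _ (by positivity)
          have : (10:ℝ)^n = (1+9)^n := by norm_num
          nlinarith
        nlinarith
      calc (5:ℝ)^(n+1) * n ≤ 50^n := h10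
        _ ≤ (exp 4)^n := pow_le_pow_left₀ (by norm_num) he50 n
        _ = exp (4*(n:ℝ)) := by rw [← Real.exp_nat_mul]; ring_nf
    have hsplit : (5*(n:ℝ))^(n+1) = 5^(n+1) * n^n * n := by
      rw [mul_pow, pow_succ]; ring
    have hexp : exp (-(5*(n:ℝ))) = exp (-(n:ℝ)) * (exp (4*(n:ℝ)))⁻¹ := by
      rw [← Real.exp_neg, ← Real.exp_add]; ring_nf
    rw [hsplit, hexp]
    have hepos : (0:ℝ) < exp (4*(n:ℝ)) := exp_pos _
    rw [show exp (-(n:ℝ)) * (exp (4*(n:ℝ)))⁻¹ * (5^(n+1) * (n:ℝ)^n * n)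
        = (n:ℝ)^n * exp (-(n:ℝ)) * ((5^(n+1) * n) / exp (4*(n:ℝ))) from by field_simp]
    have : (5^(n+1) * (n:ℝ)) / exp (4*(n:ℝ)) ≤ 1 := by
      rw [div_le_one hepos]; exact key
    nlinarith [mul_pos (pow_pos hn0 n) (exp_pos (-(n:ℝ)))]
  calc exp (-l) * l^n * |(n:ℝ) - l| ≤ exp (-l) * l^(n+1) := step0
    _ ≤ exp (-(5*(n:ℝ))) * (5*n)^(n+1) := step1
    _ ≤ (n:ℝ)^n * exp (-(n:ℝ)) := step2
    _ ≤ (Nat.factorial n : ℝ) := fact_lower n hn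

lemma poisson_bound (n : ℕ) {l : ℝ} (hl : 0 < l) :
    Real.exp (-l) * l ^ n / (Nat.factorial n : ℝ) * |(n : ℝ) - l| ≤ 1 := by
  have fp : (0:ℝ) < (Nat.factorial n : ℝ) := by exact_mod_cast n.factorial_pos
  rw [div_mul_eq_mul_div, div_le_one fp]
  rcases Nat.eq_zero_or_pos n with h0 | h1
  · subst h0
    simp only [pow_zero, mul_one, Nat.cast_zero, zero_sub, abs_neg, Nat.factorial_zero,
      Nat.cast_one]
    rw [abs_of_nonneg hl.le, Real.exp_neg]
    have hle : l ≤ exp l := by linarith [Real.add_one_le_exp l]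
    rw [inv_mul_le_iff₀ (exp_pos l)]
    linarith
  · rcases le_total l (5*(n:ℝ)) with h5 | h5
    · exact poisson_main n h1 hl h5
    · exact poisson_tail n h1 h5


end Aux

lemma TP_apply (μ σ2 : ℝ) (k : ℤ) : (TP μ σ2) {k} = ENNReal.ofReal (tpPMF μ σ2 k) := by
  rw [TP, Measure.sum_apply _ (measurableSet_singleton k)]
  rw [tsum_eq_single k ?_]
  · simp
  · intro j hj
    simp [Measure.smul_apply, Measure.dirac_apply, Set.indicator, hj]

/-- Lemma 3.12: `TP(μ, σ²){k} ⬝ |k - μ| ≤ 1` for all integers `k`. -/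
theorem tp_point_prob_mul_dist_le_one (μ σ2 : ℝ) (hσ2 : 0 < σ2) (k : ℤ) :
    ((TP μ σ2) {k}).toReal * |(k : ℝ) - μ| ≤ 1 := by
  rw [TP_apply]
  have hf : 0 ≤ Int.fract (μ - σ2) := Int.fract_nonneg _
  have hl : 0 < σ2 + Int.fract (μ - σ2) := by linarith
  have h0 : 0 ≤ tpPMF μ σ2 k := by
    unfold tpPMF; split
    · positivity
    · exact le_refl 0
  rw [ENNReal.toReal_ofReal h0]
  unfold tpPMF
  split_ifs with hcase
  · have hk : ((k - ⌊μ - σ2⌋).toNat : ℤ) = k - ⌊μ - σ2⌋ := Int.toNat_of_nonneg hcase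
    have hfl : (⌊μ - σ2⌋ : ℝ) + Int.fract (μ - σ2) = μ - σ2 := Int.floor_add_fract _
    have hkr : (k:ℝ) - μ = (((k - ⌊μ - σ2⌋).toNat : ℕ) : ℝ) - (σ2 + Int.fract (μ - σ2)) := by
      have h1 : (((k - ⌊μ - σ2⌋).toNat : ℕ) : ℝ) = (k:ℝ) - (⌊μ - σ2⌋:ℝ) := by
        exact_mod_cast congrArg (Int.cast : ℤ → ℝ) hk
      rw [h1]; linarith
    rw [hkr]
    exact poisson_bound _ hl
  · simp
end

section
/- Let (W, W') be an exchangeable pair of integer-valued random variables with E W = μ and Var W = σ² < ∞, suppose there exist 0 < λ < 1 and a random variable R with E[W' − μ | W] = (1 − λ)(W − μ) + R almost surely, and W' − W ∈ {−1, 0, +1} almost surely. Let q_max = max_{k ∈ ℤ} P[W = k]. Then E|W − μ|³ ≤ λ^{−1}(8 q_max + 1 + σ + E[|R| (W − μ)²]). -/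
open MeasureTheory ProbabilityTheory

/-!
Write `f = W - μ`, `D = W' - W` and test the pair against the odd function `s(t) = t |t|`.
Exchangeability makes `E[D (s(f + D) + s(f))]` vanish, so `E[D (s(f + D) - s(f))] = -2 E[s(f) D]`,
and conditioning on `W` turns the right-hand side into `2λ E|f|³ - 2 E[s(f) R]`. Since
`D ∈ {-1, 0, 1}`, the increment `D (s(f + D) - s(f))` is at most `2|f| + 1`, whence
`λ E|f|³ ≤ E|f| + 1/2 + E[|R| f²]` with `E|f| ≤ σ`; the claim follows as `q_max ≥ 0`.
-/

noncomputable def signedSq (t : ℝ) : ℝ := t * |t|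

lemma continuous_signedSq : Continuous signedSq := continuous_id.mul continuous_abs

lemma abs_signedSq (t : ℝ) : |signedSq t| = t ^ 2 := by
  rw [signedSq, abs_mul, abs_abs, abs_mul_abs_self, sq]

lemma signedSq_mul_self (t : ℝ) : signedSq t * t = |t| ^ 3 := by
  rcases abs_cases t with ⟨h, -⟩ | ⟨h, -⟩ <;> rw [signedSq, h] <;> ring

lemma abs_sub_mul_signedSq_sub_le {x y : ℝ} (h : y - x ∈ ({-1, 0, 1} : Set ℝ)) :
    |(y - x) * (signedSq y - signedSq x)| ≤ 2 * |x| + 1 := by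
  obtain ⟨d, hd, rfl⟩ : ∃ d ∈ ({-1, 0, 1} : Set ℝ), y = x + d := ⟨y - x, h, by ring⟩
  simp only [Set.mem_insert_iff, Set.mem_singleton_iff] at hd
  rw [add_sub_cancel_left, signedSq, signedSq]
  rcases hd with rfl | rfl | rfl
  all_goals
    rcases abs_cases x with ⟨h1, h2⟩ | ⟨h1, h2⟩ <;>
      rcases abs_cases (x + -1) with ⟨h3, h4⟩ | ⟨h3, h4⟩ <;>
      rcases abs_cases (x + 1) with ⟨h5, h6⟩ | ⟨h5, h6⟩ <;>
      simp only [h1, h3, h5] <;> rw [abs_le] <;> constructor <;> nlinarith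

section

variable {Ω : Type*} {m m0 : MeasurableSpace Ω} {P : Measure Ω} {f f' R : Ω → ℝ} {lam : ℝ}

lemma integral_abs_le_sqrt_integral_sq [IsProbabilityMeasure P] (hf : MemLp f 2 P) :
    ∫ ω, |f ω| ∂P ≤ √(∫ ω, f ω ^ 2 ∂P) := by
  have h := variance_nonneg (fun ω => |f ω|) P
  rw [variance_eq_sub (by simpa only [Real.norm_eq_abs] using hf.norm)] at h
  refine Real.le_sqrt_of_sq_le ?_
  simpa [sq_abs] using h

lemma integral_eq_zero_of_exchangeable_of_antisymm {α : Type*} [MeasurableSpace α] {X Y : Ω → α}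
    (hX : AEMeasurable X P) (hY : AEMeasurable Y P)
    (hexch : P.map (fun ω => (X ω, Y ω)) = P.map (fun ω => (Y ω, X ω)))
    {Φ : α × α → ℝ} (hΦ : StronglyMeasurable Φ) (hanti : ∀ a b, Φ (b, a) = -Φ (a, b)) :
    ∫ ω, Φ (X ω, Y ω) ∂P = 0 := by
  have hswap : ∫ ω, Φ (X ω, Y ω) ∂P = ∫ ω, Φ (Y ω, X ω) ∂P := by
    rw [← integral_map (hX.prodMk hY) hΦ.aestronglyMeasurable, hexch,
      integral_map (hY.prodMk hX) hΦ.aestronglyMeasurable]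
  rw [funext fun ω => hanti (X ω) (Y ω), integral_neg] at hswap
  linarith

lemma integral_mul_eq_of_condExp_ae_eq (hm : m ≤ m0) [SigmaFinite (P.trim hm)] {g D F : Ω → ℝ}
    (hg : StronglyMeasurable[m] g) (hgD : Integrable (g * D) P) (hD : Integrable D P)
    (hF : P[D | m] =ᵐ[P] F) :
    ∫ ω, g ω * D ω ∂P = ∫ ω, g ω * F ω ∂P :=
  calc ∫ ω, g ω * D ω ∂P = ∫ ω, P[g * D | m] ω ∂P := (integral_condExp hm).symm
    _ = ∫ ω, g ω * F ω ∂P :=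
      integral_congr_ae <| (condExp_mul_of_stronglyMeasurable_left hg hgD hD).trans
        (Filter.EventuallyEq.rfl.mul hF)

lemma aestronglyMeasurable_of_condExp_ae_eq (hm : m ≤ m0) (hf : AEStronglyMeasurable f P)
    (hcond : P[f' | m] =ᵐ[P] fun ω => (1 - lam) * f ω + R ω) :
    AEStronglyMeasurable R P := by
  refine (((stronglyMeasurable_condExp (f := f') (μ := P)).mono hm).aestronglyMeasurable.sub
    (hf.const_mul (1 - lam))).congr ?_
  filter_upwards [hcond] with ω hω
  simp only [Pi.sub_apply, hω]
  ring

lemma condExp_sub_ae_eq_of_condExp_ae_eq [IsFiniteMeasure P] (hm : m ≤ m0)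
    (hf : StronglyMeasurable[m] f) (hf_int : Integrable f P) (hf'_int : Integrable f' P)
    (hcond : P[f' | m] =ᵐ[P] fun ω => (1 - lam) * f ω + R ω) :
    P[f' - f | m] =ᵐ[P] fun ω => -lam * f ω + R ω := by
  filter_upwards [condExp_sub hf'_int hf_int m, hcond] with ω h_sub h_cond
  rw [h_sub, Pi.sub_apply, h_cond, condExp_of_stronglyMeasurable hm hf hf_int]
  ring

lemma ae_abs_le_of_condExp_sub_ae_eq (hbd : ∀ᵐ ω ∂P, |f' ω - f ω| ≤ 1)
    (hcond : P[f' - f | m] =ᵐ[P] fun ω => -lam * f ω + R ω) :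
    ∀ᵐ ω ∂P, |R ω| ≤ 1 + |lam| * |f ω| := by
  filter_upwards [ae_bdd_abs_condExp_of_ae_bdd_abs (m := m) (f := f' - f) hbd, hcond]
    with ω h_bdd h_cond
  rw [h_cond] at h_bdd
  calc |R ω| = |(-lam * f ω + R ω) + lam * f ω| := by ring_nf
    _ ≤ 1 + |lam| * |f ω| := (abs_add_le _ _).trans (by rw [abs_mul]; linarith)

lemma integrable_mul_sq_of_ae_abs_le [IsFiniteMeasure P] {c : ℝ} (hR : AEStronglyMeasurable R P)
    (hRbd : ∀ᵐ ω ∂P, |R ω| ≤ 1 + c * |f ω|) (hf2 : MemLp f 2 P)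
    (h3 : Integrable (fun ω => |f ω| ^ 3) P) :
    Integrable (fun ω => R ω * f ω ^ 2) P := by
  refine Integrable.mono' (hf2.integrable_sq.add (h3.const_mul c)) (hR.mul (hf2.1.pow 2)) ?_
  filter_upwards [hRbd] with ω h
  calc ‖R ω * f ω ^ 2‖ = |R ω| * f ω ^ 2 := by rw [Real.norm_eq_abs, abs_mul, abs_sq]
    _ ≤ (1 + c * |f ω|) * f ω ^ 2 := by gcongr
    _ = f ω ^ 2 + c * |f ω| ^ 3 := by rw [← sq_abs (f ω)]; ring

lemma integrable_jump_mul_signedSq_sub [IsFiniteMeasure P] (hf : Integrable f P)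
    (hf' : AEStronglyMeasurable f' P) (hjump : ∀ᵐ ω ∂P, f' ω - f ω ∈ ({-1, 0, 1} : Set ℝ)) :
    Integrable (fun ω => (f' ω - f ω) * (signedSq (f' ω) - signedSq (f ω))) P :=
  Integrable.mono' ((hf.abs.const_mul 2).add (integrable_const 1))
    ((hf'.sub hf.1).mul ((continuous_signedSq.comp_aestronglyMeasurable hf').sub
      (continuous_signedSq.comp_aestronglyMeasurable hf.1)))
    (hjump.mono fun _ h => abs_sub_mul_signedSq_sub_le h)

lemma integral_jump_mul_signedSq_sub_le [IsProbabilityMeasure P] (hf : Integrable f P)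
    (hf' : AEStronglyMeasurable f' P) (hjump : ∀ᵐ ω ∂P, f' ω - f ω ∈ ({-1, 0, 1} : Set ℝ)) :
    ∫ ω, (f' ω - f ω) * (signedSq (f' ω) - signedSq (f ω)) ∂P ≤ 2 * ∫ ω, |f ω| ∂P + 1 :=
  calc _ ≤ ∫ ω, (2 * |f ω| + 1) ∂P :=
        integral_mono_ae (integrable_jump_mul_signedSq_sub hf hf' hjump)
          ((hf.abs.const_mul 2).add (integrable_const 1))
          (hjump.mono fun _ h => (le_abs_self _).trans (abs_sub_mul_signedSq_sub_le h))
    _ = 2 * ∫ ω, |f ω| ∂P + 1 := by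
        rw [integral_add (hf.abs.const_mul 2) (integrable_const 1), integral_const_mul,
          integral_const, probReal_univ, one_smul]

theorem mul_integral_abs_pow_three_le_of_condExp [IsProbabilityMeasure P] (hm : m ≤ m0)
    (hf : StronglyMeasurable[m] f) (hf2 : MemLp f 2 P) (hf' : AEStronglyMeasurable f' P)
    (hjump : ∀ᵐ ω ∂P, f' ω - f ω ∈ ({-1, 0, 1} : Set ℝ))
    (hsymm : ∫ ω, (f' ω - f ω) * (signedSq (f' ω) + signedSq (f ω)) ∂P = 0)
    (hcond : P[f' | m] =ᵐ[P] fun ω => (1 - lam) * f ω + R ω)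
    (h3 : Integrable (fun ω => |f ω| ^ 3) P) :
    lam * ∫ ω, |f ω| ^ 3 ∂P ≤ ∫ ω, |f ω| ∂P + 1 / 2 + ∫ ω, |R ω| * f ω ^ 2 ∂P := by
  have hf_int : Integrable f P := hf2.integrable one_le_two
  have hbd : ∀ᵐ ω ∂P, |f' ω - f ω| ≤ 1 := hjump.mono fun ω h => by
    simp only [Set.mem_insert_iff, Set.mem_singleton_iff] at h
    rcases h with h | h | h <;> rw [h] <;> norm_num
  have hD_int : Integrable (f' - f) P := (integrable_const 1).mono' (hf'.sub hf_int.1) hbd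
  have hf'_int : Integrable f' P := by simpa using hD_int.add hf_int
  have hcondD := condExp_sub_ae_eq_of_condExp_ae_eq hm hf hf_int hf'_int hcond
  have hR := aestronglyMeasurable_of_condExp_ae_eq hm hf_int.1 hcond
  have hRf2 : Integrable (fun ω => R ω * f ω ^ 2) P :=
    integrable_mul_sq_of_ae_abs_le hR (ae_abs_le_of_condExp_sub_ae_eq hbd hcondD) hf2 h3
  have hg : StronglyMeasurable[m] (signedSq ∘ f) := continuous_signedSq.comp_stronglyMeasurable hf
  have hgD : Integrable (fun ω => signedSq (f ω) * (f' ω - f ω)) P := by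
    refine hf2.integrable_sq.mono' ((hg.mono hm).aestronglyMeasurable.mul hD_int.1) ?_
    filter_upwards [hbd] with ω h
    simpa [abs_mul, abs_signedSq] using mul_le_mul_of_nonneg_left h (sq_nonneg (f ω))
  have hgR : Integrable (fun ω => signedSq (f ω) * R ω) P :=
    hRf2.mono ((hg.mono hm).aestronglyMeasurable.mul hR) <| ae_of_all _ fun ω => by
      simp only [Real.norm_eq_abs, abs_mul, abs_signedSq, abs_sq, mul_comm, le_refl]
  have hswap : ∫ ω, (f' ω - f ω) * (signedSq (f' ω) - signedSq (f ω)) ∂P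
      = -2 * ∫ ω, signedSq (f ω) * (f' ω - f ω) ∂P := by
    have hsum : ∫ ω, (f' ω - f ω) * (signedSq (f' ω) + signedSq (f ω)) ∂P =
        ∫ ω, ((f' ω - f ω) * (signedSq (f' ω) - signedSq (f ω)) +
          2 * (signedSq (f ω) * (f' ω - f ω))) ∂P := by
      congr 1; ext ω; ring
    rw [hsum, integral_add (integrable_jump_mul_signedSq_sub hf_int hf' hjump) (hgD.const_mul 2),
      integral_const_mul] at hsymm
    linarith
  have hstein : ∫ ω, signedSq (f ω) * (f' ω - f ω) ∂P
      = -lam * ∫ ω, |f ω| ^ 3 ∂P + ∫ ω, signedSq (f ω) * R ω ∂P :=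
    calc _ = ∫ ω, signedSq (f ω) * (-lam * f ω + R ω) ∂P :=
          integral_mul_eq_of_condExp_ae_eq hm hg hgD hD_int hcondD
      _ = ∫ ω, (-lam * |f ω| ^ 3 + signedSq (f ω) * R ω) ∂P := by
          congr 1; ext ω; rw [← signedSq_mul_self]; ring
      _ = _ := by rw [integral_add (h3.const_mul _) hgR, integral_const_mul]
  have hRle : ∫ ω, signedSq (f ω) * R ω ∂P ≤ ∫ ω, |R ω| * f ω ^ 2 ∂P :=
    integral_mono hgR (hRf2.abs.congr <| ae_of_all _ fun ω => by simp only [abs_mul, abs_sq])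
      fun ω => (le_abs_self _).trans_eq (by rw [abs_mul, abs_signedSq, mul_comm])
  linarith [integral_jump_mul_signedSq_sub_le hf_int hf' hjump]

end

theorem third_moment_bound_exchangeable_pair_general
    {Ω : Type*} [MeasurableSpace Ω] (P : Measure Ω) [IsProbabilityMeasure P]
    (W W' : Ω → ℤ) (hW : Measurable W) (hW' : Measurable W')
    (μ σ2 : ℝ)
    (hL2 : MemLp (fun ω => (W ω : ℝ)) 2 P)
    (hmean : ∫ ω, (W ω : ℝ) ∂P = μ)
    (hvar : variance (fun ω => (W ω : ℝ)) P = σ2)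
    (hexch : Measure.map (fun ω => (W ω, W' ω)) P = Measure.map (fun ω => (W' ω, W ω)) P)
    (lam : ℝ) (hlam0 : 0 < lam)
    (R : Ω → ℝ)
    (hcond : P[(fun ω => (W' ω : ℝ) - μ) | MeasurableSpace.comap W ⊤] =ᵐ[P]
      fun ω => (1 - lam) * ((W ω : ℝ) - μ) + R ω)
    (hjump : ∀ᵐ ω ∂P, W' ω - W ω ∈ ({-1, 0, 1} : Set ℤ))
    (qmax : ℝ) (hqmax : qmax = ⨆ k : ℤ, (P {ω | W ω = k}).toReal) :
    (∫ ω, |(W ω : ℝ) - μ| ^ 3 ∂P) ≤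
      lam⁻¹ * (8 * qmax + 1 + Real.sqrt σ2 + ∫ ω, |R ω| * ((W ω : ℝ) - μ) ^ 2 ∂P) := by
  have hqmax0 : 0 ≤ qmax := hqmax ▸ Real.iSup_nonneg fun _ => ENNReal.toReal_nonneg
  by_cases h3 : Integrable (fun ω => |(W ω : ℝ) - μ| ^ 3) P
  swap
  · rw [integral_undef h3]
    positivity
  have hsymm := integral_eq_zero_of_exchangeable_of_antisymm hW.aemeasurable hW'.aemeasurable
    hexch (Φ := fun p => ((p.2 : ℝ) - μ - ((p.1 : ℝ) - μ)) *
      (signedSq ((p.2 : ℝ) - μ) + signedSq ((p.1 : ℝ) - μ)))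
    (measurable_of_countable _).stronglyMeasurable fun _ _ => by ring
  have hmain := mul_integral_abs_pow_three_le_of_condExp (f := fun ω => (W ω : ℝ) - μ)
    (f' := fun ω => (W' ω : ℝ) - μ) hW.comap_le
    ((measurable_of_countable fun k : ℤ => (k : ℝ) - μ).comp
      (comap_measurable W)).stronglyMeasurable
    (hL2.sub (memLp_const μ)) ((measurable_of_countable fun k : ℤ => (k : ℝ) - μ).comp
      hW').aestronglyMeasurable
    (hjump.mono fun ω h => by
      rw [sub_sub_sub_cancel_right, ← Int.cast_sub]
      simp only [Set.mem_insert_iff, Set.mem_singleton_iff] at h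
      rcases h with h | h | h <;> rw [h] <;> norm_num)
    hsymm hcond h3
  have hsd : ∫ ω, |(W ω : ℝ) - μ| ∂P ≤ √σ2 := by
    rw [← hvar, variance_eq_integral hL2.aemeasurable, hmean]
    exact integral_abs_le_sqrt_integral_sq (hL2.sub (memLp_const μ))
  rw [le_inv_mul_iff₀ hlam0]
  linarith

/-- Lemma 3.13 (third moment bound): under the exchangeable-pair assumptions,
`E|W - μ|³ ≤ λ⁻¹(8 q_max + 1 + σ + E[|R|(W - μ)²])`. -/
theorem third_moment_bound_exchangeable_pair
    {Ω : Type*} [MeasurableSpace Ω] (P : Measure Ω) [IsProbabilityMeasure P]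
    (W W' : Ω → ℤ) (hW : Measurable W) (hW' : Measurable W')
    (μ σ2 : ℝ) (hσ2 : 0 < σ2)
    (hL2 : MemLp (fun ω => (W ω : ℝ)) 2 P)
    (hmean : ∫ ω, (W ω : ℝ) ∂P = μ)
    (hvar : variance (fun ω => (W ω : ℝ)) P = σ2)
    (hexch : Measure.map (fun ω => (W ω, W' ω)) P = Measure.map (fun ω => (W' ω, W ω)) P)
    (lam : ℝ) (hlam0 : 0 < lam) (hlam1 : lam < 1)
    (R : Ω → ℝ)
    (hcond : P[(fun ω => (W' ω : ℝ) - μ) | MeasurableSpace.comap W ⊤] =ᵐ[P]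
      fun ω => (1 - lam) * ((W ω : ℝ) - μ) + R ω)
    (hjump : ∀ᵐ ω ∂P, W' ω - W ω ∈ ({-1, 0, 1} : Set ℤ))
    (qmax : ℝ) (hqmax : qmax = ⨆ k : ℤ, (P {ω | W ω = k}).toReal) :
    (∫ ω, |(W ω : ℝ) - μ| ^ 3 ∂P) ≤
      lam⁻¹ * (8 * qmax + 1 + Real.sqrt σ2 + ∫ ω, |R ω| * ((W ω : ℝ) - μ) ^ 2 ∂P) :=
  third_moment_bound_exchangeable_pair_general P W W' hW hW' μ σ2 hL2 hmean hvar hexch lam hlam0 R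
    hcond hjump qmax hqmax
end

section
/- Let 1 ≤ m ≤ N and 1 ≤ n ≤ N with m ≤ N, and let W have the hypergeometric distribution Hyp(m, n, N). Define S(w) = (m − w)(n − w)/(m(N − m + 1)). Then Var S(W) ≤ n m (m + n)² (N − n)(N − m) / (m²(N − m + 1)²(N − 1)N²). -/
open MeasureTheory ProbabilityTheory

/-- Point probabilities of the hypergeometric distribution `Hyp(m, n, N)`. -/
noncomputable def hypPMF (m n N : ℕ) (k : ℤ) : ℝ :=
  if 0 ≤ k ∧ k ≤ (m : ℤ) then
    (n.choose k.toNat : ℝ) * ((N - n).choose (m - k.toNat)) / (N.choose m)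
  else 0

/-! On `[0, m]`, where `W` lives, `S(x) = (m - x)(n - x)/(m(N - m + 1))` is Lipschitz with
constant `L = (m + n)/(m(N - m + 1))`, because `S(x) - S(y) = (x - y)(x + y - m - n)/(m(N - m + 1))`
and `|x + y - m - n| ≤ m + n` there. Comparing `S(W)` with the constant `S(E W)` gives
`Var S(W) ≤ E (S(W) - S(E W))² ≤ L² Var W`, and `Var W = nm(N - n)(N - m)/((N - 1)N²)` follows from
the factorial moments `E[W(W - 1)⋯(W - r + 1)] = n^(r) m^(r) / N^(r)`, a Vandermonde-type
identity. -/

open Finset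

theorem Nat.sum_antidiagonal_descFactorial_mul_choose_mul_choose (n M m r : ℕ) :
    ∑ p ∈ antidiagonal (m + r), p.1.descFactorial r * (n.choose p.1 * M.choose p.2) =
      n.descFactorial r * (n + M - r).choose m := by
  induction r generalizing n with
  | zero => simp [Nat.add_choose_eq]
  | succ r ih =>
    rw [← add_assoc, Nat.sum_antidiagonal_succ, Nat.zero_descFactorial_succ, zero_mul, zero_add]
    cases n with
    | zero => simp
    | succ a =>
      have hterm (i j : ℕ) : (i + 1).descFactorial (r + 1) * ((a + 1).choose (i + 1) *
          M.choose j) = (a + 1) * (i.descFactorial r * (a.choose i * M.choose j)) := by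
        rw [Nat.succ_descFactorial_succ]
        linear_combination (i.descFactorial r * M.choose j) * (Nat.add_one_mul_choose_eq a i).symm
      rw [sum_congr rfl fun p _ => hterm p.1 p.2, ← mul_sum, ih, Nat.succ_descFactorial_succ,
        mul_assoc, show a + 1 + M - (r + 1) = a + M - r by omega]

theorem Nat.choose_mul_descFactorial (N m r : ℕ) :
    N.choose (m + r) * (m + r).descFactorial r = N.descFactorial r * (N - r).choose m := by
  rw [Nat.descFactorial_eq_factorial_mul_choose, Nat.descFactorial_eq_factorial_mul_choose,
    mul_left_comm, Nat.choose_mul (Nat.le_add_left r m), Nat.add_sub_cancel]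
  ring

section Variance

variable {Ω : Type*} [MeasurableSpace Ω] {μ : Measure Ω} [IsProbabilityMeasure μ]

lemma variance_le_integral_sub_sq {X : Ω → ℝ} (hX : AEStronglyMeasurable X μ) (c : ℝ) :
    Var[X; μ] ≤ ∫ ω, (X ω - c) ^ 2 ∂μ := by
  rw [← variance_sub_const hX c]
  exact variance_le_expectation_sq (hX.sub aestronglyMeasurable_const)

/-- Comparing with the constant `f (μ[X])`, which is admissible since `μ[X] ∈ s` by convexity. -/
lemma variance_comp_le_of_lipschitzOnWith {X : Ω → ℝ} {f : ℝ → ℝ} {s : Set ℝ} {K : NNReal}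
    (hf : LipschitzOnWith K f s) (hs : Convex ℝ s) (hsc : IsClosed s) (hX : MemLp X 2 μ)
    (hXs : ∀ᵐ ω ∂μ, X ω ∈ s) (hfX : AEStronglyMeasurable (fun ω => f (X ω)) μ) :
    Var[fun ω => f (X ω); μ] ≤ K ^ 2 * Var[X; μ] := by
  have hmean : μ[X] ∈ s := hs.integral_mem hsc hXs (hX.integrable one_le_two)
  have hpointwise : ∀ᵐ ω ∂μ, (f (X ω) - f μ[X]) ^ 2 ≤ K ^ 2 * (X ω - μ[X]) ^ 2 := by
    filter_upwards [hXs] with ω hω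
    have h := hf.dist_le_mul _ hω _ hmean
    rw [Real.dist_eq, Real.dist_eq] at h
    rw [← sq_abs, ← sq_abs (X ω - _), ← mul_pow]
    exact pow_le_pow_left₀ (abs_nonneg _) h 2
  calc Var[fun ω => f (X ω); μ] ≤ ∫ ω, (f (X ω) - f μ[X]) ^ 2 ∂μ :=
        variance_le_integral_sub_sq hfX _
    _ ≤ ∫ ω, K ^ 2 * (X ω - μ[X]) ^ 2 ∂μ :=
        integral_mono_of_nonneg (.of_forall fun _ => sq_nonneg _)
          (((hX.sub (memLp_const _)).integrable_sq).const_mul _) hpointwise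
    _ = K ^ 2 * Var[X; μ] := by
        rw [integral_const_mul, variance_eq_integral hX.aestronglyMeasurable.aemeasurable]

end Variance

lemma lipschitzOnWith_sub_mul_sub_div {a b c : ℝ} (hb : 0 ≤ b) (hc : 0 ≤ c) :
    LipschitzOnWith ((a + b) / c).toNNReal (fun x : ℝ => (a - x) * (b - x) / c) (Set.Icc 0 a) := by
  refine LipschitzOnWith.of_dist_le_mul fun x hx y hy => ?_
  obtain ⟨hx0, hxa⟩ := hx
  obtain ⟨hy0, hya⟩ := hy
  rw [Real.dist_eq, Real.dist_eq,
    show (a - x) * (b - x) / c - (a - y) * (b - y) / c = (x + y - (a + b)) / c * (x - y) by ring,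
    abs_mul, abs_div, abs_of_nonneg hc]
  refine mul_le_mul_of_nonneg_right (le_trans ?_ (Real.le_coe_toNNReal _)) (abs_nonneg _)
  gcongr
  rw [abs_le]
  constructor <;> linarith

section Hypergeometric

variable {m n N : ℕ}

lemma hypPMF_nonneg (m n N : ℕ) (k : ℤ) : 0 ≤ hypPMF m n N k := by
  unfold hypPMF
  split_ifs <;> positivity

lemma hypPMF_natCast {k : ℕ} (hk : k ≤ m) :
    hypPMF m n N k = n.choose k * (N - n).choose (m - k) / N.choose m := by
  simp [hypPMF, hk]

lemma hypPMF_eq_zero {k : ℤ} (hk : ¬(0 ≤ k ∧ k ≤ m)) : hypPMF m n N k = 0 := if_neg hk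

lemma sum_hypPMF_mul_descFactorial (hmN : m ≤ N) (hnN : n ≤ N) (r : ℕ) :
    ∑ k ∈ range (m + 1), hypPMF m n N k * (k.descFactorial r : ℝ) =
      n.descFactorial r * m.descFactorial r / N.descFactorial r := by
  rcases lt_or_ge m r with hmr | hrm
  · have hzero (k : ℕ) (hk : k ∈ range (m + 1)) : (k.descFactorial r : ℝ) = 0 := by
      rw [Nat.cast_eq_zero, Nat.descFactorial_eq_zero_iff_lt]
      grind
    rw [sum_eq_zero fun k hk => by rw [hzero k hk, mul_zero],
      Nat.descFactorial_eq_zero_iff_lt.mpr hmr, Nat.cast_zero, mul_zero, zero_div]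
  obtain ⟨m, rfl⟩ : ∃ m', m = m' + r := ⟨m - r, by omega⟩
  have hchoose : (N.choose (m + r) : ℝ) ≠ 0 := by exact_mod_cast (Nat.choose_pos hmN).ne'
  have hdesc : (N.descFactorial r : ℝ) ≠ 0 := by
    exact_mod_cast (Nat.descFactorial_pos.mpr (by omega)).ne'
  have hsum : ∑ k ∈ range (m + r + 1), hypPMF (m + r) n N k * (k.descFactorial r : ℝ) =
      ((∑ p ∈ antidiagonal (m + r), p.1.descFactorial r * (n.choose p.1 * (N - n).choose p.2) :
        ℕ) : ℝ) / N.choose (m + r) := by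
    rw [Nat.sum_antidiagonal_eq_sum_range_succ_mk, Nat.cast_sum, sum_div]
    refine sum_congr rfl fun k hk => ?_
    rw [hypPMF_natCast (by grind)]
    push_cast
    ring
  rw [hsum, Nat.sum_antidiagonal_descFactorial_mul_choose_mul_choose, Nat.add_sub_cancel' hnN,
    div_eq_div_iff hchoose hdesc]
  norm_cast
  linear_combination n.descFactorial r * (Nat.choose_mul_descFactorial N m r).symm

variable (m n N) in
noncomputable def hypergeometric : Measure ℤ :=
  ∑ k ∈ range (m + 1), ENNReal.ofReal (hypPMF m n N k) • Measure.dirac (k : ℤ)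

lemma hypergeometric_singleton (k : ℤ) :
    hypergeometric m n N {k} = ENNReal.ofReal (hypPMF m n N k) := by
  rw [hypergeometric, Measure.finsetSum_apply]
  by_cases hk : 0 ≤ k ∧ k ≤ m
  · lift k to ℕ using hk.1
    rw [sum_eq_single k (fun j _ hjk => by simp [hjk]) (fun h => by grind)]
    simp
  · rw [hypPMF_eq_zero hk, ENNReal.ofReal_zero]
    exact sum_eq_zero fun j hj => by simp; grind

lemma hasLaw_hypergeometric {Ω : Type*} [MeasurableSpace Ω] {P : Measure Ω} {W : Ω → ℤ}
    (hW : Measurable W) (hlaw : ∀ k : ℤ, P {ω | W ω = k} = ENNReal.ofReal (hypPMF m n N k)) :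
    HasLaw W (hypergeometric m n N) P where
  aemeasurable := hW.aemeasurable
  map_eq := Measure.ext_of_singleton fun k => by
    rw [Measure.map_apply hW (measurableSet_singleton k), hypergeometric_singleton]
    exact hlaw k

lemma integrable_hypergeometric (f : ℤ → ℝ) : Integrable f (hypergeometric m n N) := by
  simp [hypergeometric, integrable_finsetSum_measure, integrable_dirac, Integrable.smul_measure]

lemma integral_hypergeometric (f : ℤ → ℝ) :
    ∫ x, f x ∂hypergeometric m n N = ∑ k ∈ range (m + 1), hypPMF m n N k * f k := by
  rw [hypergeometric, integral_finsetSum_measure]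
  · simp [ENNReal.toReal_ofReal (hypPMF_nonneg m n N _)]
  · exact fun k _ => (integrable_dirac (by simp)).smul_measure (by simp)

lemma isProbabilityMeasure_hypergeometric (hmN : m ≤ N) (hnN : n ≤ N) :
    IsProbabilityMeasure (hypergeometric m n N) := by
  have htotal := sum_hypPMF_mul_descFactorial hmN hnN 0
  simp only [Nat.descFactorial_zero, Nat.cast_one, mul_one, div_one] at htotal
  constructor
  simp only [hypergeometric, Measure.finsetSum_apply, Measure.smul_apply, measure_univ,
    smul_eq_mul, mul_one]
  rw [← ENNReal.ofReal_sum_of_nonneg (f := fun k : ℕ => hypPMF m n N k)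
    fun k _ => hypPMF_nonneg m n N k, htotal, ENNReal.ofReal_one]

lemma ae_hypergeometric : ∀ᵐ x ∂hypergeometric m n N, 0 ≤ x ∧ x ≤ (m : ℤ) := by
  rw [hypergeometric, ae_finsetSum_measure_iff]
  intro k hk
  refine Measure.ae_smul_measure ((ae_dirac_iff (.of_discrete)).mpr ?_) _
  grind

lemma memLp_hypergeometric (f : ℤ → ℝ) : MemLp f 2 (hypergeometric m n N) :=
  (memLp_two_iff_integrable_sq .of_discrete).mpr (integrable_hypergeometric _)

lemma variance_hypergeometric (hmN : m ≤ N) (hnN : n ≤ N) :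
    Var[(↑); hypergeometric m n N] =
      n * m * ((N : ℝ) - n) * ((N : ℝ) - m) / (((N : ℝ) - 1) * (N : ℝ) ^ 2) := by
  have := isProbabilityMeasure_hypergeometric hmN hnN
  have hmean := sum_hypPMF_mul_descFactorial hmN hnN 1
  have hsecond := sum_hypPMF_mul_descFactorial hmN hnN 2
  simp only [Nat.descFactorial_one, Nat.cast_descFactorial_two] at hmean hsecond
  have hsq : ∑ k ∈ range (m + 1), hypPMF m n N k * (k : ℝ) ^ 2 =
      ∑ k ∈ range (m + 1), hypPMF m n N k * ((k : ℝ) * (k - 1)) +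
        ∑ k ∈ range (m + 1), hypPMF m n N k * k := by
    rw [← sum_add_distrib]
    exact sum_congr rfl fun k _ => by ring
  rw [variance_eq_sub (memLp_hypergeometric _), integral_hypergeometric, integral_hypergeometric]
  simp only [Pi.pow_apply, Int.cast_natCast]
  rw [hsq, hmean, hsecond]
  rcases lt_or_ge N 2 with hN | hN
  -- for `N ≤ 1` the right-hand side vanishes through `x / 0 = 0`
  · interval_cases N <;> interval_cases m <;> interval_cases n <;> norm_num
  · have hN1 : (N : ℝ) - 1 ≠ 0 := by
      have : (2 : ℝ) ≤ N := by exact_mod_cast hN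
      linarith
    have hN0 : (N : ℝ) ≠ 0 := by positivity
    field_simp
    ring

end Hypergeometric

theorem hypergeometric_var_S_bound_general
    {Ω : Type*} [MeasurableSpace Ω] (P : Measure Ω) [IsProbabilityMeasure P]
    (N m n : ℕ) (hmN : m ≤ N) (hnN : n ≤ N)
    (W : Ω → ℤ) (hW : Measurable W)
    (hlaw : ∀ k : ℤ, P {ω | W ω = k} = ENNReal.ofReal (hypPMF m n N k)) :
    variance (fun ω => ((m : ℝ) - W ω) * ((n : ℝ) - W ω) / (m * ((N : ℝ) - m + 1))) P ≤
      (n : ℝ) * m * ((m : ℝ) + n) ^ 2 * ((N : ℝ) - n) * ((N : ℝ) - m) /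
        ((m : ℝ) ^ 2 * ((N : ℝ) - m + 1) ^ 2 * ((N : ℝ) - 1) * (N : ℝ) ^ 2) := by
  have hlawW := hasLaw_hypergeometric hW hlaw
  have := isProbabilityMeasure_hypergeometric hmN hnN
  have hWP := hlawW.measurePreserving hW
  have hrange : ∀ᵐ ω ∂P, (W ω : ℝ) ∈ Set.Icc 0 (m : ℝ) :=
    ((hlawW.ae_iff .of_discrete).mpr ae_hypergeometric).mono fun ω h =>
      ⟨by exact_mod_cast h.1, by exact_mod_cast h.2⟩
  have hden : 0 ≤ (m : ℝ) * ((N : ℝ) - m + 1) := by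
    have : (m : ℝ) ≤ N := by exact_mod_cast hmN
    positivity
  calc _ ≤ (((m : ℝ) + n) / (m * ((N : ℝ) - m + 1))).toNNReal ^ 2 * Var[fun ω => (W ω : ℝ); P] :=
        variance_comp_le_of_lipschitzOnWith (lipschitzOnWith_sub_mul_sub_div (by positivity) hden)
          (convex_Icc _ _) isClosed_Icc ((memLp_hypergeometric _).comp_measurePreserving hWP)
          hrange (by fun_prop)
    _ = _ := by
        rw [hWP.variance_fun_comp .of_discrete, variance_hypergeometric hmN hnN,
          Real.coe_toNNReal _ (div_nonneg (by positivity) hden), div_pow, mul_pow,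
          div_mul_div_comm]
        congr 1 <;> ring

/-- Variance bound (4.1) for `S(W) = (m - W)(n - W)/(m(N - m + 1))` when `W` is
hypergeometrically distributed. -/
theorem hypergeometric_var_S_bound
    {Ω : Type*} [MeasurableSpace Ω] (P : Measure Ω) [IsProbabilityMeasure P]
    (N m n : ℕ) (hm : 1 ≤ m) (hmN : m ≤ N) (hn : 1 ≤ n) (hnN : n ≤ N)
    (W : Ω → ℤ) (hW : Measurable W)
    (hlaw : ∀ k : ℤ, P {ω | W ω = k} = ENNReal.ofReal (hypPMF m n N k)) :
    variance (fun ω => ((m : ℝ) - W ω) * ((n : ℝ) - W ω) / (m * ((N : ℝ) - m + 1))) P ≤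
      (n : ℝ) * m * ((m : ℝ) + n) ^ 2 * ((N : ℝ) - n) * ((N : ℝ) - m) /
        ((m : ℝ) ^ 2 * ((N : ℝ) - m + 1) ^ 2 * ((N : ℝ) - 1) * (N : ℝ) ^ 2) :=
  hypergeometric_var_S_bound_general P N m n hmN hnN W hW hlaw
end

section
/- Let n ≥ 2, let B ~ Bi(n, 1/2), let V be B rounded up to the next even integer (V = B if B is even, V = B + 1 if B is odd), and let W = V/2. Then Var W = (n + 1)/16. -/
open MeasureTheory ProbabilityTheory Finset unitInterval

/-!
With `s = (-1)^B` one has `W = (2B + 1 - s)/4`. Under `Bin(n, p)` the binomial theorem at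
`x = -p`, `y = 1 - p` gives `E[s] = (1 - 2p)^n` and `E[B s] = -np(1 - 2p)^(n-1)`, both of which
vanish for `p = 1/2` and `n ≥ 2`. Since `s² = 1`, this leaves
`Var W = (4 Var B + Var s)/16 = (n + 1)/16`.
-/

section BinomialSums

variable {R : Type*} [CommRing R] (x y : R)

-- `k * C(n + 1, k) = (n + 1) * C(n, k - 1)` shifts the sum down by one degree.
theorem sum_range_pow_mul_pow_mul_choose_mul_natCast_mul (g : ℕ → R) (n : ℕ) :
    ∑ k ∈ range (n + 2), x ^ k * y ^ (n + 1 - k) * (n + 1).choose k * (k * g k) =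
      (n + 1) * x * ∑ k ∈ range (n + 1), x ^ k * y ^ (n - k) * n.choose k * g (k + 1) := by
  rw [sum_range_succ', mul_sum]
  simp only [Nat.cast_zero, zero_mul, mul_zero, add_zero]
  refine sum_congr rfl fun k _ => ?_
  have h : ((n + 1).choose (k + 1) * (k + 1) : R) = (n + 1) * n.choose k := by
    exact_mod_cast congrArg (Nat.cast : ℕ → R) (Nat.add_one_mul_choose_eq n k).symm
  rw [Nat.add_sub_add_right, pow_succ]
  push_cast
  linear_combination (x * x ^ k * y ^ (n - k) * g (k + 1)) * h

theorem sum_range_pow_mul_pow_mul_choose_mul_natCast (n : ℕ) :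
    ∑ k ∈ range (n + 1), x ^ k * y ^ (n - k) * n.choose k * (k : R) =
      n * x * (x + y) ^ (n - 1) := by
  cases n with
  | zero => simp
  | succ n =>
    have h := sum_range_pow_mul_pow_mul_choose_mul_natCast_mul x y (fun _ => 1) n
    simp only [mul_one] at h
    rw [h, ← add_pow]
    push_cast
    ring

theorem sum_range_pow_mul_pow_mul_choose_mul_natCast_sq (n : ℕ) :
    ∑ k ∈ range (n + 1), x ^ k * y ^ (n - k) * n.choose k * (k : R) ^ 2 =
      n * x * (x + y) ^ (n - 1) + n * (n - 1) * x ^ 2 * (x + y) ^ (n - 2) := by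
  cases n with
  | zero => simp
  | succ n =>
    have h := sum_range_pow_mul_pow_mul_choose_mul_natCast_mul x y (fun k => (k : R)) n
    simp only [← sq] at h
    simp only [h, Nat.cast_add, Nat.cast_one, mul_add, mul_one, sum_add_distrib,
      sum_range_pow_mul_pow_mul_choose_mul_natCast, ← add_pow]
    rw [Nat.add_sub_cancel, show n + 1 - 2 = n - 1 by omega]
    ring

end BinomialSums

namespace ProbabilityTheory

variable (n : ℕ) (p : I)

theorem integral_binomial_eq_sum_range (f : ℕ → ℝ) :
    ∫ k, f k ∂Bin(n, p) =
      ∑ k ∈ range (n + 1), (p : ℝ) ^ k * (1 - p) ^ (n - k) * n.choose k * f k := by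
  rw [integral_binomial, Nat.range_succ_eq_Iic]
  exact sum_congr rfl fun k _ => by rw [smul_eq_mul]; ring

theorem integral_natCast_binomial : ∫ k, (k : ℝ) ∂Bin(n, p) = n * p := by
  rw [integral_binomial_eq_sum_range, sum_range_pow_mul_pow_mul_choose_mul_natCast]
  simp

theorem integral_natCast_sq_binomial :
    ∫ k, (k : ℝ) ^ 2 ∂Bin(n, p) = n * p + n * (n - 1) * p ^ 2 := by
  rw [integral_binomial_eq_sum_range, sum_range_pow_mul_pow_mul_choose_mul_natCast_sq]
  simp

theorem integral_neg_one_pow_binomial : ∫ k, (-1 : ℝ) ^ k ∂Bin(n, p) = (1 - 2 * p) ^ n := by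
  calc _ = ∑ k ∈ range (n + 1), (-p : ℝ) ^ k * (1 - p) ^ (n - k) * n.choose k := by
        rw [integral_binomial_eq_sum_range]
        exact sum_congr rfl fun k _ => by rw [neg_pow]; ring
    _ = _ := by rw [← add_pow]; ring

theorem integral_natCast_mul_neg_one_pow_binomial :
    ∫ k, (k : ℝ) * (-1) ^ k ∂Bin(n, p) = -(n * p * (1 - 2 * p) ^ (n - 1)) := by
  calc _ = ∑ k ∈ range (n + 1), (-p : ℝ) ^ k * (1 - p) ^ (n - k) * n.choose k * k := by
        rw [integral_binomial_eq_sum_range]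
        exact sum_congr rfl fun k _ => by rw [neg_pow]; ring
    _ = _ := by rw [sum_range_pow_mul_pow_mul_choose_mul_natCast]; ring

theorem map_eq_binomial {Ω : Type*} [MeasurableSpace Ω] {P : Measure Ω} {B : Ω → ℕ}
    (hB : Measurable B)
    (hlaw : ∀ k, P {ω | B ω = k} = ENNReal.ofReal (n.choose k * p ^ k * (1 - p) ^ (n - k))) :
    P.map B = Bin(n, p) :=
  Measure.ext_of_singleton fun k => by
    rw [Measure.map_apply hB (measurableSet_singleton k), binomial_singleton]
    exact hlaw k

end ProbabilityTheory

noncomputable def unitInterval.half : I := ⟨1 / 2, by norm_num, by norm_num⟩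

theorem unitInterval.coe_half : (half : ℝ) = 1 / 2 := rfl

-- `(2k + 1 - (-1)^k)/4 = ⌈k/2⌉`
theorem variance_ceil_half_binomial_half (n : ℕ) (hn : 2 ≤ n) :
    Var[fun k : ℕ => (2 * k + 1 - (-1 : ℝ) ^ k) / 4; Bin(n, half)] = (n + 1) / 16 := by
  have h0 : 1 - 2 * (half : ℝ) = 0 := by rw [coe_half]; norm_num
  have hs : ∫ k, (-1 : ℝ) ^ k ∂Bin(n, half) = 0 := by
    rw [integral_neg_one_pow_binomial, h0, zero_pow (by omega)]
  have hks : ∫ k, (k : ℝ) * (-1) ^ k ∂Bin(n, half) = 0 := by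
    rw [integral_natCast_mul_neg_one_pow_binomial, h0, zero_pow (by omega), mul_zero, neg_zero]
  have hsq (k : ℕ) : ((2 * k + 1 - (-1 : ℝ) ^ k) / 4) ^ 2 =
      (4 * (k : ℝ) ^ 2 + 4 * k + 2 - 4 * (k * (-1) ^ k) - 2 * (-1) ^ k) / 16 := by
    have : ((-1 : ℝ) ^ k) ^ 2 = 1 := by rw [← pow_mul, mul_comm, pow_mul]; simp
    linear_combination this / 16
  rw [variance_eq_sub ((memLp_two_iff_integrable_sq .of_discrete).2 (integrable_binomial _))]
  simp only [Pi.pow_apply, hsq, integral_div, integral_sub, integral_add, integral_const_mul,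
    integral_const, integrable_binomial, probReal_univ, smul_eq_mul, integral_natCast_binomial,
    integral_natCast_sq_binomial, hs, hks, coe_half]
  ring

theorem natCast_ite_even_div_two (k : ℕ) :
    ((if Even k then k else k + 1 : ℕ) : ℝ) / 2 = (2 * k + 1 - (-1) ^ k) / 4 := by
  rcases Nat.even_or_odd k with h | h
  · simp only [h, ↓reduceIte, h.neg_one_pow]; ring
  · simp only [Nat.not_even_iff_odd.2 h, ↓reduceIte, h.neg_one_pow]; push_cast; ring

theorem choose_div_two_pow_eq_mul_half_pow (n k : ℕ) :
    (n.choose k : ℝ) / 2 ^ n = n.choose k * (half : ℝ) ^ k * (1 - half) ^ (n - k) := by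
  rcases le_or_gt k n with hk | hk
  · have hsplit : (1 / 2 : ℝ) ^ k * (1 / 2) ^ (n - k) = 1 / 2 ^ n := by
      rw [← pow_add, Nat.add_sub_cancel' hk, one_div_pow]
    rw [coe_half, show (1 : ℝ) - 1 / 2 = 1 / 2 by norm_num,
      mul_assoc, hsplit, mul_one_div]
  · simp [Nat.choose_eq_zero_of_lt hk]

theorem parity_variance_general
    {Ω : Type*} [MeasurableSpace Ω] (P : Measure Ω)
    (n : ℕ) (hn : 2 ≤ n)
    (B : Ω → ℕ) (hB : Measurable B)
    (hlaw : ∀ k : ℕ, P {ω | B ω = k} = ENNReal.ofReal ((n.choose k : ℝ) / 2 ^ n))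
    (V : Ω → ℕ) (hV : ∀ ω, V ω = if Even (B ω) then B ω else B ω + 1) :
    variance (fun ω => (V ω : ℝ) / 2) P = ((n : ℝ) + 1) / 16 := by
  have hmap : P.map B = Bin(n, half) :=
    map_eq_binomial n half hB fun k => by rw [hlaw, choose_div_two_pow_eq_mul_half_pow]
  calc variance (fun ω => (V ω : ℝ) / 2) P
      = Var[(fun k : ℕ => (2 * k + 1 - (-1 : ℝ) ^ k) / 4) ∘ B; P] := by
        simp only [hV, natCast_ite_even_div_two, Function.comp_def]
    _ = Var[fun k : ℕ => (2 * k + 1 - (-1 : ℝ) ^ k) / 4; Bin(n, half)] := by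
        rw [← hmap, variance_map .of_discrete hB.aemeasurable]
    _ = ((n : ℝ) + 1) / 16 := variance_ceil_half_binomial_half n hn

/-- The variance of `W = V/2`, where `V` is a `Bi(n, 1/2)` random variable rounded up
to the next even integer, equals `(n + 1)/16`. -/
theorem parity_variance
    {Ω : Type*} [MeasurableSpace Ω] (P : Measure Ω) [IsProbabilityMeasure P]
    (n : ℕ) (hn : 2 ≤ n)
    (B : Ω → ℕ) (hB : Measurable B)
    (hlaw : ∀ k : ℕ, P {ω | B ω = k} = ENNReal.ofReal ((n.choose k : ℝ) / 2 ^ n))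
    (V : Ω → ℕ) (hV : ∀ ω, V ω = if Even (B ω) then B ω else B ω + 1) :
    variance (fun ω => (V ω : ℝ) / 2) P = ((n : ℝ) + 1) / 16 :=
  parity_variance_general P n hn B hB hlaw V hV
end

section
/- Let (W, W') be an exchangeable pair of integer-valued random variables with E W = μ and Var W = σ² < ∞, suppose there exist 0 < λ < 1 and a random variable R with E[W' − μ | W] = (1 − λ)(W − μ) + R almost surely, and W' − W ∈ {−1, 0, +1} almost surely. Set S = P[W' = W + 1 | W]. Then for every bounded function g : ℤ → ℝ, E[(W − μ) g(W)] = λ^{−1} E[S Δg(W)] + λ^{−1} E[R g(W)], where Δg(k) := g(k + 1) − g(k). -/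
/-!
Conditioning on `W`, the regression condition gives
`E[(W' - W) g(W)] = -λ E[(W - μ) g(W)] + E[R g(W)]`.
On the other hand, since `W' - W ∈ {-1, 0, 1}`, the variable `(W' - W) g(W)` is `g(W)` on
up-jumps minus `g(W)` on down-jumps. Exchangeability turns the down-jump term into
`E[1{W' = W + 1} g(W + 1)]`, so `E[(W' - W) g(W)] = -E[1{W' = W + 1} Δg(W)] = -E[S Δg(W)]`, the last step again by
conditioning on `W`.
-/

open MeasureTheory ProbabilityTheory

theorem integral_condExp_comap_mul {Ω α : Type*} {mΩ : MeasurableSpace Ω} {P : Measure Ω}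
    [IsFiniteMeasure P] {X : Ω → α} (hX : MeasurableSpace.comap X ⊤ ≤ mΩ) {Y : Ω → ℝ}
    (hY : Integrable Y P) {f : α → ℝ} {C : ℝ} (hf : ∀ a, |f a| ≤ C) :
    ∫ ω, (P[Y | MeasurableSpace.comap X ⊤]) ω * f (X ω) ∂P = ∫ ω, Y ω * f (X ω) ∂P := by
  have hfX : StronglyMeasurable[MeasurableSpace.comap X ⊤] (f ∘ X) :=
    (measurable_from_top.comp (comap_measurable X)).stronglyMeasurable
  have hpull := condExp_stronglyMeasurable_mul_of_bound hX hfX hY C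
    (ae_of_all _ fun ω => hf (X ω))
  calc ∫ ω, (P[Y | MeasurableSpace.comap X ⊤]) ω * f (X ω) ∂P
      = ∫ ω, (P[f ∘ X * Y | MeasurableSpace.comap X ⊤]) ω ∂P :=
        integral_congr_ae (hpull.mono fun ω hω => by rw [hω, Pi.mul_apply, mul_comm]; rfl)
    _ = ∫ ω, Y ω * f (X ω) ∂P := by
        rw [integral_condExp hX]
        exact integral_congr_ae (ae_of_all _ fun ω => mul_comm _ _)

theorem integrable_comp_of_abs_le {Ω α : Type*} [MeasurableSpace Ω] [MeasurableSpace α]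
    [MeasurableSingletonClass α] [Countable α] {P : Measure Ω} [IsFiniteMeasure P]
    {X : Ω → α} (hX : Measurable X) {F : α → ℝ} {C : ℝ} (hF : ∀ a, |F a| ≤ C) :
    Integrable (fun ω => F (X ω)) P :=
  .of_bound ((measurable_of_countable F).comp hX).aestronglyMeasurable C
    (ae_of_all _ fun ω => hF (X ω))

theorem sub_mul_eq_ite_sub_ite_of_sub_mem (g : ℤ → ℝ) {a b : ℤ}
    (h : b - a ∈ ({-1, 0, 1} : Set ℤ)) :
    ((b : ℝ) - a) * g a = (if b = a + 1 then g a else 0) - (if a = b + 1 then g a else 0) := by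
  simp only [Set.mem_insert_iff, Set.mem_singleton_iff] at h
  rcases h with h | h | h
  · rw [if_neg (by omega), if_pos (by omega), show b = a - 1 by omega]
    push_cast; ring
  · rw [if_neg (by omega), if_neg (by omega), show b = a by omega]
    ring
  · rw [if_pos (by omega), if_neg (by omega), show b = a + 1 by omega]
    push_cast; ring

namespace ProbabilityTheory

variable {Ω α : Type*} [MeasurableSpace Ω] [MeasurableSpace α]

def ExchangeablePair (X Y : Ω → α) (P : Measure Ω) : Prop :=
  P.map (fun ω => (X ω, Y ω)) = P.map (fun ω => (Y ω, X ω))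

namespace ExchangeablePair

variable {P : Measure Ω} {X Y : Ω → α}

theorem identDistrib (hX : Measurable X) (hY : Measurable Y) (hXY : ExchangeablePair X Y P) :
    IdentDistrib Y X P P where
  aemeasurable_fst := hY.aemeasurable
  aemeasurable_snd := hX.aemeasurable
  map_eq := by
    have h := congrArg (Measure.map Prod.fst) hXY
    rw [Measure.map_map measurable_fst (hX.prodMk hY),
      Measure.map_map measurable_fst (hY.prodMk hX)] at h
    exact h.symm

theorem integral_comp_swap {E : Type*} [NormedAddCommGroup E] [NormedSpace ℝ E]
    (hX : Measurable X) (hY : Measurable Y) (hXY : ExchangeablePair X Y P)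
    {F : α × α → E} (hF : StronglyMeasurable F) :
    ∫ ω, F (X ω, Y ω) ∂P = ∫ ω, F (Y ω, X ω) ∂P := by
  rw [← integral_map (hX.prodMk hY).aemeasurable hF.aestronglyMeasurable, hXY,
    integral_map (hY.prodMk hX).aemeasurable hF.aestronglyMeasurable]

theorem integral_sub_mul_eq_neg_integral_indicator_mul [IsFiniteMeasure P] {W W' : Ω → ℤ}
    (hW : Measurable W) (hW' : Measurable W') (hexch : ExchangeablePair W W' P)
    (hjump : ∀ᵐ ω ∂P, W' ω - W ω ∈ ({-1, 0, 1} : Set ℤ)) {g : ℤ → ℝ} {C : ℝ}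
    (hg : ∀ k, |g k| ≤ C) :
    ∫ ω, ((W' ω : ℝ) - W ω) * g (W ω) ∂P =
      -∫ ω, {ω | W' ω = W ω + 1}.indicator (fun _ => (1 : ℝ)) ω * (g (W ω + 1) - g (W ω)) ∂P := by
  set upFrom : ℤ × ℤ → ℝ := fun p => if p.2 = p.1 + 1 then g p.1 else 0
  set upTo : ℤ × ℤ → ℝ := fun p => if p.2 = p.1 + 1 then g p.2 else 0
  have hC : 0 ≤ C := (abs_nonneg _).trans (hg 0)
  have hupFrom : ∀ p, |upFrom p| ≤ C := fun p => by dsimp only [upFrom]; split_ifs <;> simp [hg, hC]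
  have hupTo : ∀ p, |upTo p| ≤ C := fun p => by dsimp only [upTo]; split_ifs <;> simp [hg, hC]
  have hintFrom := integrable_comp_of_abs_le (P := P) (hW.prodMk hW') hupFrom
  have hintTo := integrable_comp_of_abs_le (P := P) (hW.prodMk hW') hupTo
  -- a down-jump of `(W, W')` is an up-jump of `(W', W)`
  have hswap : ∫ ω, upTo (W' ω, W ω) ∂P = ∫ ω, upTo (W ω, W' ω) ∂P :=
    (hexch.integral_comp_swap hW hW' (measurable_of_countable upTo).stronglyMeasurable).symm
  calc ∫ ω, ((W' ω : ℝ) - W ω) * g (W ω) ∂P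
      = ∫ ω, upFrom (W ω, W' ω) - upTo (W' ω, W ω) ∂P :=
        integral_congr_ae (hjump.mono fun ω h => sub_mul_eq_ite_sub_ite_of_sub_mem g h)
    _ = ∫ ω, upFrom (W ω, W' ω) - upTo (W ω, W' ω) ∂P := by
        rw [integral_sub hintFrom (integrable_comp_of_abs_le (hW'.prodMk hW) hupTo), hswap,
          integral_sub hintFrom hintTo]
    _ = _ := by
        rw [← integral_neg]
        refine integral_congr_ae (ae_of_all _ fun ω => ?_)
        simp only [upFrom, upTo, Set.indicator_apply, Set.mem_ofPred_eq]
        split_ifs with h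
        · rw [h]; ring
        · ring

end ExchangeablePair

end ProbabilityTheory

theorem stein_identity_exchangeable_pair_general
    {Ω : Type*} [MeasurableSpace Ω] (P : Measure Ω) [IsProbabilityMeasure P]
    (W W' : Ω → ℤ) (hW : Measurable W) (hW' : Measurable W')
    (μ : ℝ)
    (hL2 : MemLp (fun ω => (W ω : ℝ)) 2 P)
    (hexch : Measure.map (fun ω => (W ω, W' ω)) P = Measure.map (fun ω => (W' ω, W ω)) P)
    (lam : ℝ) (hlam0 : 0 < lam)
    (R : Ω → ℝ)
    (hcond : P[(fun ω => (W' ω : ℝ) - μ) | MeasurableSpace.comap W ⊤] =ᵐ[P]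
      fun ω => (1 - lam) * ((W ω : ℝ) - μ) + R ω)
    (hjump : ∀ᵐ ω ∂P, W' ω - W ω ∈ ({-1, 0, 1} : Set ℤ))
    (S : Ω → ℝ)
    (hS : S = P[Set.indicator {ω | W' ω = W ω + 1} (fun _ => (1 : ℝ)) |
      MeasurableSpace.comap W ⊤]) :
    ∀ g : ℤ → ℝ, (∃ C : ℝ, ∀ k : ℤ, |g k| ≤ C) →
      ∫ ω, ((W ω : ℝ) - μ) * g (W ω) ∂P =
        lam⁻¹ * (∫ ω, S ω * (g (W ω + 1) - g (W ω)) ∂P) +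
          lam⁻¹ * ∫ ω, R ω * g (W ω) ∂P := by
  rintro g ⟨C, hg⟩
  have hWμ : Integrable (fun ω => (W ω : ℝ) - μ) P :=
    (hL2.integrable one_le_two).sub (integrable_const μ)
  have hW'μ : Integrable (fun ω => (W' ω : ℝ) - μ) P :=
    (((ExchangeablePair.identDistrib hW hW' hexch).comp
      (measurable_of_countable ((↑) : ℤ → ℝ))).integrable_iff.mpr
        (hL2.integrable one_le_two)).sub (integrable_const μ)
  have hR : Integrable R P :=
    ((integrable_condExp (m := MeasurableSpace.comap W ⊤) (f := fun ω => (W' ω : ℝ) - μ)).sub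
      (hWμ.const_mul (1 - lam))).congr (hcond.mono fun ω hω => by rw [Pi.sub_apply, hω]; ring)
  have hmul {X : Ω → ℝ} (hX : Integrable X P) : Integrable (fun ω => X ω * g (W ω)) P :=
    hX.mul_bdd ((measurable_of_countable g).comp hW).aestronglyMeasurable
      (ae_of_all _ fun ω => hg (W ω))
  have hregression : ∫ ω, ((W' ω : ℝ) - μ) * g (W ω) ∂P =
      (1 - lam) * ∫ ω, ((W ω : ℝ) - μ) * g (W ω) ∂P + ∫ ω, R ω * g (W ω) ∂P := by
    rw [← integral_condExp_comap_mul hW.comap_le hW'μ hg, ← integral_const_mul,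
      ← integral_add ((hmul hWμ).const_mul _) (hmul hR)]
    exact integral_congr_ae (hcond.mono fun ω hω => by simp only [hω]; ring)
  have hdrift : ∫ ω, ((W' ω : ℝ) - μ) * g (W ω) ∂P =
      ∫ ω, ((W' ω : ℝ) - W ω) * g (W ω) ∂P + ∫ ω, ((W ω : ℝ) - μ) * g (W ω) ∂P := by
    rw [← integral_add ?_ (hmul hWμ)]
    · exact integral_congr_ae (ae_of_all _ fun ω => by ring)
    · exact hmul ((hW'μ.sub hWμ).congr (ae_of_all _ fun ω => by simp only [Pi.sub_apply]; ring))
  have hS_jump : ∫ ω, S ω * (g (W ω + 1) - g (W ω)) ∂P =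
      ∫ ω, {ω | W' ω = W ω + 1}.indicator (fun _ => (1 : ℝ)) ω * (g (W ω + 1) - g (W ω)) ∂P := by
    rw [hS]
    exact integral_condExp_comap_mul hW.comap_le
      ((integrable_const 1).indicator (measurableSet_eq_fun hW' (hW.add_const 1)))
      (fun k => (abs_sub _ _).trans (add_le_add (hg (k + 1)) (hg k)))
  have hstein := ExchangeablePair.integral_sub_mul_eq_neg_integral_indicator_mul hW hW' hexch
    hjump hg
  rw [← hS_jump] at hstein
  field_simp
  linarith

/-- The Stein identity (3.22): for an exchangeable pair satisfying the linear regression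
condition and the unit-jump condition, and for every bounded `g : ℤ → ℝ`,
`E[(W - μ) g(W)] = λ⁻¹ E[S Δg(W)] + λ⁻¹ E[R g(W)]`. -/
theorem stein_identity_exchangeable_pair
    {Ω : Type*} [MeasurableSpace Ω] (P : Measure Ω) [IsProbabilityMeasure P]
    (W W' : Ω → ℤ) (hW : Measurable W) (hW' : Measurable W')
    (μ σ2 : ℝ) (hσ2 : 0 < σ2)
    (hL2 : MemLp (fun ω => (W ω : ℝ)) 2 P)
    (hmean : ∫ ω, (W ω : ℝ) ∂P = μ)
    (hvar : variance (fun ω => (W ω : ℝ)) P = σ2)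
    (hexch : Measure.map (fun ω => (W ω, W' ω)) P = Measure.map (fun ω => (W' ω, W ω)) P)
    (lam : ℝ) (hlam0 : 0 < lam) (hlam1 : lam < 1)
    (R : Ω → ℝ)
    (hcond : P[(fun ω => (W' ω : ℝ) - μ) | MeasurableSpace.comap W ⊤] =ᵐ[P]
      fun ω => (1 - lam) * ((W ω : ℝ) - μ) + R ω)
    (hjump : ∀ᵐ ω ∂P, W' ω - W ω ∈ ({-1, 0, 1} : Set ℤ))
    (S : Ω → ℝ)
    (hS : S = P[Set.indicator {ω | W' ω = W ω + 1} (fun _ => (1 : ℝ)) |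
      MeasurableSpace.comap W ⊤]) :
    ∀ g : ℤ → ℝ, (∃ C : ℝ, ∀ k : ℤ, |g k| ≤ C) →
      ∫ ω, ((W ω : ℝ) - μ) * g (W ω) ∂P =
        lam⁻¹ * (∫ ω, S ω * (g (W ω + 1) - g (W ω)) ∂P) +
          lam⁻¹ * ∫ ω, R ω * g (W ω) ∂P :=
  stein_identity_exchangeable_pair_general P W W' hW hW' μ hL2 hexch lam hlam0 R hcond hjump S hS
end
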